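/- arXiv:math/0603011 — 8 statements merged into one kernel-verified Lean document; each statement's English description precedes it below -/
import Mathlib

section
/- Let D, D' ⊆ ℂⁿ×ℂ be domains in Chern–Moser normal form up to weighted order 4 at 0, defined by ψ, ψ' with leading bidegree-(2,2) terms φ₄, φ'₄ as in the context. Let B : ℂⁿ → ℂⁿ be ℂ-linear, v ∈ ℂⁿ and c ∈ ℂ, and assume the strict inequalities: Im c > 0, and for every z ∈ ℂⁿ∖{0}, [Re⟨z, B(z)⟩ − ‖z‖²·Re c]² < (Im c)·[φ₄(z) − φ'₄(z) − 2‖z‖²·Im⟨z, B(z)⟩ − ‖z‖⁴·Im c]. Then there exists an open neighborhood V ⊆ U of 0 such that the holomorphic map F(z,w) := (z + w·B(z) + w²·v, w + w²·c) satisfies F(V ∩ D) ⊆ D'. In particular, for any choice of second-order jet satisfying the above strict inequalities, there is a germ at 0 of a holomorphic map from D to D' smooth up to the boundary with F(0)=0, dF₀ = id and that prescribed second-order jet. -/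
set_option maxHeartbeats 2000000


open Metric Filter Topology
open scoped ComplexInnerProductSpace

private lemma pow5_add (a b : ℝ) (ha : 0 ≤ a) (hb : 0 ≤ b) :
    (a + b)^5 ≤ 16*(a^5 + b^5) := by
  nlinarith [mul_nonneg (pow_nonneg ha 3) (sq_nonneg (a-b)),
    mul_nonneg (pow_nonneg hb 3) (sq_nonneg (a-b)),
    mul_nonneg (mul_nonneg (mul_nonneg ha ha) hb) (sq_nonneg (a-b)),
    mul_nonneg (mul_nonneg (mul_nonneg hb hb) ha) (sq_nonneg (a-b))]

private lemma pow5_add3 (a b c : ℝ) (ha : 0 ≤ a) (hb : 0 ≤ b) (hc : 0 ≤ c) :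
    (a + b + c)^5 ≤ 256*(a^5 + b^5 + c^5) := by
  have h1 : (a + b + c)^5 ≤ 16*((a+b)^5 + c^5) := pow5_add (a+b) c (by linarith) hc
  have h2 : (a + b)^5 ≤ 16*(a^5 + b^5) := pow5_add a b ha hb
  nlinarith [pow_nonneg hc 5]

private lemma pow4_add (a b : ℝ) (ha : 0 ≤ a) (hb : 0 ≤ b) :
    (a + b)^4 ≤ 8*(a^4 + b^4) := by
  nlinarith [sq_nonneg (a-b), sq_nonneg (a+b), mul_nonneg ha hb, sq_nonneg a, sq_nonneg b,
    mul_nonneg (mul_nonneg ha ha) (sq_nonneg (a-b)),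
    mul_nonneg (mul_nonneg hb hb) (sq_nonneg (a-b)),
    mul_nonneg (mul_nonneg ha hb) (sq_nonneg (a-b)),
    mul_nonneg (mul_nonneg ha hb) (sq_nonneg (a+b))]

private lemma hom_zero {E : Type*} [NormedAddCommGroup E] [NormedSpace ℝ E]
    (φ : E → ℝ) (hom : ∀ (t : ℝ) (z), φ (t • z) = t^4 * φ z) : φ 0 = 0 := by
  have := hom 0 0
  simpa using this

private lemma hom_bound {E : Type*} [NormedAddCommGroup E] [NormedSpace ℝ E] [ProperSpace E]
    (φ : E → ℝ) (hc : Continuous φ) (hom : ∀ (t : ℝ) (z), φ (t • z) = t^4 * φ z) :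
    ∃ C ≥ 0, ∀ z, |φ z| ≤ C * ‖z‖^4 := by
  obtain ⟨C, hC⟩ := (isCompact_closedBall (0:E) 1).exists_bound_of_continuousOn
    hc.continuousOn
  refine ⟨max C 0, le_max_right _ _, fun z => ?_⟩
  rcases eq_or_ne z 0 with rfl | hz
  · simp [hom_zero φ hom]
  · have hn : 0 < ‖z‖ := norm_pos_iff.mpr hz
    have h1 : φ z = ‖z‖^4 * φ (‖z‖⁻¹ • z) := by
      rw [← hom]; congr 1
      rw [smul_smul, mul_inv_cancel₀ (ne_of_gt hn), one_smul]
    have h2 : ‖z‖⁻¹ • z ∈ closedBall (0:E) 1 := by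
      simp [norm_smul, abs_of_nonneg (inv_nonneg.mpr hn.le),
        inv_mul_cancel₀ (ne_of_gt hn)]
    have := hC _ h2
    rw [Real.norm_eq_abs] at this
    rw [h1, abs_mul, abs_of_nonneg (by positivity : (0:ℝ) ≤ ‖z‖^4)]
    calc ‖z‖^4 * |φ (‖z‖⁻¹ • z)| ≤ ‖z‖^4 * C := by
          exact mul_le_mul_of_nonneg_left this (by positivity)
      _ ≤ max C 0 * ‖z‖^4 := by
          rw [mul_comm]
          exact mul_le_mul_of_nonneg_right (le_max_left _ _) (by positivity)

private lemma fderiv_hom_bound {E : Type*} [NormedAddCommGroup E] [NormedSpace ℝ E]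
    [ProperSpace E]
    (φ : E → ℝ) (hs : ContDiff ℝ (⊤ : ℕ∞) φ) (hom : ∀ (t : ℝ) (z), φ (t • z) = t^4 * φ z) :
    ∃ C ≥ 0, ∀ x, ‖fderiv ℝ φ x‖ ≤ C * ‖x‖^3 := by
  set g := fderiv ℝ φ with hg
  have hgc : Continuous g := hs.continuous_fderiv (by simp)
  have hdiff : Differentiable ℝ φ := hs.differentiable (by simp)
  have hghom : ∀ (t : ℝ), t ≠ 0 → ∀ x, g (t • x) = t^3 • g x := by
    intro t ht x
    have h1 : HasFDerivAt (fun y : E => φ (t • y))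
        ((g (t • x)).comp (t • ContinuousLinearMap.id ℝ E)) x := by
      have hsm : HasFDerivAt (fun y : E => t • y) (t • ContinuousLinearMap.id ℝ E) x :=
        (hasFDerivAt_id x).const_smul t
      exact ((hdiff (t • x)).hasFDerivAt).comp x hsm
    have h2 : HasFDerivAt (fun y : E => φ (t • y)) (t^4 • g x) x := by
      have : (fun y : E => φ (t • y)) = fun y => t^4 * φ y := by
        funext y; exact hom t y
      rw [this]
      simpa [smul_eq_mul] using ((hdiff x).hasFDerivAt).const_mul (t^4)
    have h3 := h1.unique h2
    have h4 : (g (t • x)).comp (t • ContinuousLinearMap.id ℝ E) = t • g (t • x) := by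
      ext y
      simp [ContinuousLinearMap.comp_apply, map_smul, smul_eq_mul]
    rw [h4] at h3
    have h5 : t • g (t • x) = t • (t^3 • g x) := by
      rw [h3, smul_smul]; ring_nf
    exact smul_right_injective _ ht h5
  have hg0 : g 0 = 0 := by
    have h := hghom 2 (by norm_num) 0
    simp only [smul_zero] at h
    have h2 : ((2:ℝ)^3 - 1) • g 0 = 0 := by
      rw [sub_smul, ← h, one_smul, sub_self]
    rcases smul_eq_zero.mp h2 with h3 | h3
    · norm_num at h3
    · exact h3
  obtain ⟨C, hC⟩ := (isCompact_closedBall (0:E) 1).exists_bound_of_continuousOn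
    ((continuous_norm.comp hgc).continuousOn (s := closedBall 0 1))
  refine ⟨max C 0, le_max_right _ _, fun x => ?_⟩
  rcases eq_or_ne x 0 with rfl | hx
  · simp [hg0]
  · have hn : 0 < ‖x‖ := norm_pos_iff.mpr hx
    have h1 : g x = ‖x‖^3 • g (‖x‖⁻¹ • x) := by
      have := hghom ‖x‖ (ne_of_gt hn) (‖x‖⁻¹ • x)
      rw [smul_smul, mul_inv_cancel₀ (ne_of_gt hn), one_smul] at this
      rw [this]
    have h2 : ‖x‖⁻¹ • x ∈ closedBall (0:E) 1 := by
      simp [norm_smul, abs_of_nonneg (inv_nonneg.mpr hn.le),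
        inv_mul_cancel₀ (ne_of_gt hn)]
    have h3 := hC _ h2
    simp only [Function.comp_apply, Real.norm_eq_abs, abs_norm] at h3
    rw [h1, norm_smul, Real.norm_eq_abs, abs_of_nonneg (by positivity : (0:ℝ) ≤ ‖x‖^3)]
    calc ‖x‖^3 * ‖g (‖x‖⁻¹ • x)‖ ≤ ‖x‖^3 * C := mul_le_mul_of_nonneg_left h3 (by positivity)
      _ ≤ max C 0 * ‖x‖^3 := by
          rw [mul_comm]; exact mul_le_mul_of_nonneg_right (le_max_left _ _) (by positivity)

private lemma quartic_diff {E : Type*} [NormedAddCommGroup E] [NormedSpace ℝ E]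
    [ProperSpace E]
    (φ : E → ℝ) (hs : ContDiff ℝ (⊤ : ℕ∞) φ) (hom : ∀ (t : ℝ) (z), φ (t • z) = t^4 * φ z) :
    ∃ C ≥ 0, ∀ x y : E, |φ y - φ x| ≤ C * (‖x‖ + ‖y - x‖)^3 * ‖y - x‖ := by
  obtain ⟨C, hC0, hC⟩ := fderiv_hom_bound φ hs hom
  refine ⟨C, hC0, fun x y => ?_⟩
  set ρ := ‖x‖ + ‖y - x‖ with hρ
  have hρ0 : 0 ≤ ρ := by positivity
  have hdiff : Differentiable ℝ φ := hs.differentiable (by simp)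
  have hconv : Convex ℝ (closedBall (0:E) ρ) := convex_closedBall 0 ρ
  have hxm : x ∈ closedBall (0:E) ρ := by
    simp only [mem_closedBall, dist_zero_right]
    linarith [norm_nonneg (y - x)]
  have hym : y ∈ closedBall (0:E) ρ := by
    simp only [mem_closedBall, dist_zero_right]
    calc ‖y‖ = ‖x + (y - x)‖ := by congr 1; abel
      _ ≤ ‖x‖ + ‖y - x‖ := norm_add_le _ _
  have hb : ∀ p ∈ closedBall (0:E) ρ, ‖fderiv ℝ φ p‖ ≤ C * ρ^3 := by
    intro p hp
    simp only [mem_closedBall, dist_zero_right] at hp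
    calc ‖fderiv ℝ φ p‖ ≤ C * ‖p‖^3 := hC p
      _ ≤ C * ρ^3 := by
          apply mul_le_mul_of_nonneg_left _ hC0
          exact pow_le_pow_left₀ (norm_nonneg _) hp 3
  have := hconv.norm_image_sub_le_of_norm_fderiv_le
    (fun p _ => hdiff p) hb hxm hym
  rw [Real.norm_eq_abs] at this
  exact this

private lemma eps_min (n : ℕ)
    (φ₄ φ'₄ : EuclideanSpace ℂ (Fin n) → ℝ)
    (hφ₄c : Continuous φ₄) (hφ'₄c : Continuous φ'₄)
    (hφ₄hom : ∀ (t : ℝ) (z), φ₄ ((t : ℂ) • z) = t ^ 4 * φ₄ z)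
    (hφ'₄hom : ∀ (t : ℝ) (z), φ'₄ ((t : ℂ) • z) = t ^ 4 * φ'₄ z)
    (B : EuclideanSpace ℂ (Fin n) →L[ℂ] EuclideanSpace ℂ (Fin n)) (c : ℂ) (hc : 0 < c.im)
    (hstrict : ∀ z : EuclideanSpace ℂ (Fin n), z ≠ 0 →
      ((⟪B z, z⟫).re - ‖z‖ ^ 2 * c.re) ^ 2 <
        c.im * (φ₄ z - φ'₄ z - 2 * ‖z‖ ^ 2 * (⟪B z, z⟫).im - ‖z‖ ^ 4 * c.im)) :
    ∃ ε > 0, ∀ (z : EuclideanSpace ℂ (Fin n)) (u : ℝ),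
      ε * (‖z‖^4 + u^2) ≤ c.im * u^2 - 2*u*((⟪B z, z⟫).re - ‖z‖^2*c.re)
        + (φ₄ z - φ'₄ z - 2*‖z‖^2*(⟪B z, z⟫).im - ‖z‖^4*c.im) := by
  set g : EuclideanSpace ℂ (Fin n) × ℝ → ℝ := fun p => c.im * p.2^2 - 2*p.2*((⟪B p.1, p.1⟫).re - ‖p.1‖^2*c.re)
    + (φ₄ p.1 - φ'₄ p.1 - 2*‖p.1‖^2*(⟪B p.1, p.1⟫).im - ‖p.1‖^4*c.im) with hgdef
  -- real-smul homogeneity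
  have h4 : ∀ (t : ℝ) (z : EuclideanSpace ℂ (Fin n)), φ₄ (t • z) = t^4 * φ₄ z := by
    intro t z; rw [← Complex.coe_smul]; exact hφ₄hom t z
  have h4' : ∀ (t : ℝ) (z : EuclideanSpace ℂ (Fin n)), φ'₄ (t • z) = t^4 * φ'₄ z := by
    intro t z; rw [← Complex.coe_smul]; exact hφ'₄hom t z
  have hInSc : ∀ (μ : ℝ) (z : EuclideanSpace ℂ (Fin n)), (⟪B (μ • z), μ • z⟫ : ℂ) = ((μ^2 : ℝ) : ℂ) * ⟪B z, z⟫ := by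
    intro μ z
    rw [← Complex.coe_smul, map_smul, inner_smul_left, inner_smul_right, Complex.conj_ofReal]
    push_cast; ring
  have hnorm : ∀ (μ : ℝ), 0 ≤ μ → ∀ z : EuclideanSpace ℂ (Fin n), ‖μ • z‖ = μ * ‖z‖ := by
    intro μ hμ z; rw [norm_smul, Real.norm_eq_abs, abs_of_nonneg hμ]
  have hGhom : ∀ (μ : ℝ), 0 ≤ μ → ∀ (z : EuclideanSpace ℂ (Fin n)) (u : ℝ), g (μ • z, μ^2 * u) = μ^4 * g (z, u) := by
    intro μ hμ z u
    simp only [hgdef, hInSc, h4, h4', hnorm μ hμ]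
    simp only [Complex.mul_re, Complex.mul_im, Complex.ofReal_re, Complex.ofReal_im]
    ring
  have hgc : Continuous g := by
    have hi : Continuous fun p : EuclideanSpace ℂ (Fin n) × ℝ => (⟪B p.1, p.1⟫ : ℂ) :=
      (B.continuous.comp continuous_fst).inner continuous_fst
    apply Continuous.add
    · apply Continuous.sub
      · exact continuous_const.mul (continuous_snd.pow 2)
      · exact (continuous_const.mul continuous_snd).mul
          ((Complex.continuous_re.comp hi).sub
            (((continuous_fst.norm.pow 2)).mul continuous_const))
    · apply Continuous.sub
      · apply Continuous.sub
        · exact (hφ₄c.comp continuous_fst).sub (hφ'₄c.comp continuous_fst)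
        · exact (continuous_const.mul (continuous_fst.norm.pow 2)).mul
            (Complex.continuous_im.comp hi)
      · exact (continuous_fst.norm.pow 4).mul continuous_const
  -- the weighted sphere
  set K : Set (EuclideanSpace ℂ (Fin n) × ℝ) := {p | ‖p.1‖^4 + p.2^2 = 1} with hKdef
  have hKcl : IsClosed K :=
    isClosed_eq ((continuous_fst.norm.pow 4).add (continuous_snd.pow 2)) continuous_const
  have hKsub : K ⊆ closedBall 0 1 := by
    intro p hp
    simp only [hKdef, Set.mem_setOf_eq] at hp
    have h1 : ‖p.1‖ ≤ 1 := by
      by_contra h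
      push_neg at h
      nlinarith [one_lt_pow₀ h (by norm_num : (4:ℕ) ≠ 0), sq_nonneg p.2]
    have h2 : ‖p.2‖ ≤ 1 := by
      rw [Real.norm_eq_abs, abs_le]
      constructor <;> nlinarith [pow_nonneg (norm_nonneg p.1) 4, sq_nonneg (p.2-1), sq_nonneg (p.2+1)]
    simp only [mem_closedBall, dist_zero_right, Prod.norm_def]
    exact max_le h1 h2
  have hKcomp : IsCompact K := (isCompact_closedBall _ _).of_isClosed_subset hKcl hKsub
  have hKne : ((0 : EuclideanSpace ℂ (Fin n)), (1 : ℝ)) ∈ K := by simp [hKdef]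
  obtain ⟨p₀, hp₀K, hmin⟩ := hKcomp.exists_isMinOn ⟨_, hKne⟩ hgc.continuousOn
  have hminle : ∀ q ∈ K, g p₀ ≤ g q := fun q hq => hmin hq
  -- positivity of the minimum
  have hε : 0 < g p₀ := by
    simp only [hKdef, Set.mem_setOf_eq] at hp₀K
    rcases eq_or_ne p₀.1 0 with hz | hz
    · have e1 : (⟪B p₀.1, p₀.1⟫ : ℂ) = 0 := by rw [hz, map_zero, inner_zero_left]
      have e2 : φ₄ p₀.1 = 0 := by
        rw [hz]; have := h4 0 0; simpa using this
      have e3 : φ'₄ p₀.1 = 0 := by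
        rw [hz]; have := h4' 0 0; simpa using this
      have e4 : ‖p₀.1‖ = 0 := by rw [hz, norm_zero]
      have e5 : p₀.2^2 = 1 := by rw [e4] at hp₀K; simpa using hp₀K
      simp only [hgdef, e1, e2, e3, e4, Complex.zero_re, Complex.zero_im]
      nlinarith [hc, e5]
    · have hstr := hstrict p₀.1 hz
      simp only [hgdef]
      have h2 : 0 < c.im * (c.im * p₀.2^2 - 2*p₀.2*((⟪B p₀.1, p₀.1⟫).re - ‖p₀.1‖^2*c.re)
          + (φ₄ p₀.1 - φ'₄ p₀.1 - 2*‖p₀.1‖^2*(⟪B p₀.1, p₀.1⟫).im - ‖p₀.1‖^4*c.im)) := by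
        nlinarith [hstr, sq_nonneg (c.im * p₀.2 - ((⟪B p₀.1, p₀.1⟫).re - ‖p₀.1‖^2*c.re))]
      by_contra hle
      push_neg at hle
      nlinarith [mul_nonneg hc.le (neg_nonneg.mpr hle)]
  refine ⟨g p₀, hε, fun z u => ?_⟩
  rcases eq_or_lt_of_le (by positivity : (0:ℝ) ≤ ‖z‖^4 + u^2) with h0 | h0
  · have h4z : ‖z‖^4 = 0 := le_antisymm (by nlinarith [sq_nonneg u]) (by positivity)
    have hz : ‖z‖ = 0 := pow_eq_zero_iff (by norm_num : (4:ℕ) ≠ 0) |>.mp h4z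
    have h2u : u^2 = 0 := le_antisymm (by nlinarith [pow_nonneg (norm_nonneg z) 4]) (sq_nonneg u)
    have hu : u = 0 := pow_eq_zero_iff (by norm_num : (2:ℕ) ≠ 0) |>.mp h2u
    have hz0 : z = 0 := norm_eq_zero.mp hz
    have e1 : (⟪B z, z⟫ : ℂ) = 0 := by rw [hz0, map_zero, inner_zero_left]
    have e2 : φ₄ z = 0 := by rw [hz0]; have := h4 0 0; simpa using this
    have e3 : φ'₄ z = 0 := by rw [hz0]; have := h4' 0 0; simpa using this
    rw [← h0, hu, hz, e1, e2, e3]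
    simp
  · set P := ‖z‖^4 + u^2 with hPdef
    set lam := Real.sqrt (Real.sqrt P) with hlam
    have hP0 : 0 < P := h0
    have hlam0 : 0 < lam := Real.sqrt_pos.mpr (Real.sqrt_pos.mpr hP0)
    have hlam2 : lam^2 = Real.sqrt P := Real.sq_sqrt (Real.sqrt_nonneg P)
    have hlam4 : lam^4 = P := by
      have : lam^4 = (lam^2)^2 := by ring
      rw [this, hlam2, Real.sq_sqrt hP0.le]
    have hq : (lam⁻¹ • z, lam⁻¹^2 * u) ∈ K := by
      simp only [hKdef, Set.mem_setOf_eq]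
      rw [hnorm lam⁻¹ (by positivity) z]
      have : (lam⁻¹ * ‖z‖)^4 + (lam⁻¹^2 * u)^2 = lam⁻¹^4 * P := by
        rw [hPdef]; ring
      rw [this, inv_pow, inv_mul_eq_one₀ (by positivity)]
      exact hlam4
    have hgzu : g (z, u) = lam^4 * g (lam⁻¹ • z, lam⁻¹^2 * u) := by
      have := hGhom lam hlam0.le (lam⁻¹ • z) (lam⁻¹^2 * u)
      rw [smul_smul, mul_inv_cancel₀ (ne_of_gt hlam0), one_smul] at this
      have harg : lam^2 * (lam⁻¹^2 * u) = u := by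
        rw [inv_pow]; field_simp
      rw [harg] at this
      exact this
    have hfin : g p₀ * P ≤ g (z, u) := by
      rw [hgzu, hlam4]
      rw [mul_comm]
      exact mul_le_mul_of_nonneg_left (hminle _ hq) hP0.le
    calc g p₀ * (‖z‖^4 + u^2) = g p₀ * P := by rw [hPdef]
      _ ≤ g (z, u) := hfin
      _ = c.im * u^2 - 2*u*((⟪B z, z⟫).re - ‖z‖^2*c.re)
        + (φ₄ z - φ'₄ z - 2*‖z‖^2*(⟪B z, z⟫).im - ‖z‖^4*c.im) := by simp only [hgdef]


/-- any second order jet satisfying the strict inequalities of Theorem 3.2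
is realized by a germ of a holomorphic map between domains in Chern-Moser normal form
up to weighted order 4, namely by `F(z,w) = (z + wB(z) + w²v, w + w²c)`. -/
theorem boundary_jets_stmt3 (n : ℕ) (hn : 1 ≤ n)
    (U U' : Set (EuclideanSpace ℂ (Fin n) × ℂ))
    (hUopen : IsOpen U) (hU0 : (0 : EuclideanSpace ℂ (Fin n) × ℂ) ∈ U)
    (hU'open : IsOpen U') (hU'0 : (0 : EuclideanSpace ℂ (Fin n) × ℂ) ∈ U')
    (φ₄ φ'₄ : EuclideanSpace ℂ (Fin n) → ℝ)
    (hφ₄smooth : ContDiff ℝ (⊤ : ℕ∞) φ₄) (hφ'₄smooth : ContDiff ℝ (⊤ : ℕ∞) φ'₄)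
    (hφ₄hom : ∀ (t : ℝ) (z), φ₄ ((t : ℂ) • z) = t ^ 4 * φ₄ z)
    (hφ'₄hom : ∀ (t : ℝ) (z), φ'₄ ((t : ℂ) • z) = t ^ 4 * φ'₄ z)
    (hφ₄circ : ∀ (θ : ℝ) (z), φ₄ (Complex.exp ((θ : ℂ) * Complex.I) • z) = φ₄ z)
    (hφ'₄circ : ∀ (θ : ℝ) (z), φ'₄ (Complex.exp ((θ : ℂ) * Complex.I) • z) = φ'₄ z)
    (ψ ψ' : EuclideanSpace ℂ (Fin n) × ℝ → ℝ)
    (hψ : ContDiff ℝ (⊤ : ℕ∞) ψ) (hψ' : ContDiff ℝ (⊤ : ℕ∞) ψ')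
    (hR : ∃ Cst > 0, ∃ δ > 0, ∀ (z : EuclideanSpace ℂ (Fin n)) (u : ℝ), ‖z‖ < δ → |u| < δ →
      |ψ (z, u) - φ₄ z| ≤ Cst * (‖z‖ + Real.sqrt |u|) ^ 5)
    (hR' : ∃ Cst > 0, ∃ δ > 0, ∀ (z : EuclideanSpace ℂ (Fin n)) (u : ℝ), ‖z‖ < δ → |u| < δ →
      |ψ' (z, u) - φ'₄ z| ≤ Cst * (‖z‖ + Real.sqrt |u|) ^ 5)
    (D D' : Set (EuclideanSpace ℂ (Fin n) × ℂ))
    (hD : D = {p | p ∈ U ∧ ‖p.1‖ ^ 2 + ψ (p.1, p.2.re) < p.2.im})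
    (hD' : D' = {p | p ∈ U' ∧ ‖p.1‖ ^ 2 + ψ' (p.1, p.2.re) < p.2.im})
    -- the prescribed second order jet, satisfying the strict inequalities
    (B : EuclideanSpace ℂ (Fin n) →L[ℂ] EuclideanSpace ℂ (Fin n))
    (v : EuclideanSpace ℂ (Fin n)) (c : ℂ)
    (hc : 0 < c.im)
    (hstrict : ∀ z : EuclideanSpace ℂ (Fin n), z ≠ 0 →
      ((⟪B z, z⟫).re - ‖z‖ ^ 2 * c.re) ^ 2 <
        c.im * (φ₄ z - φ'₄ z - 2 * ‖z‖ ^ 2 * (⟪B z, z⟫).im - ‖z‖ ^ 4 * c.im)) :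
    ∃ V : Set (EuclideanSpace ℂ (Fin n) × ℂ), IsOpen V ∧ 0 ∈ V ∧ V ⊆ U ∧
      (fun p : EuclideanSpace ℂ (Fin n) × ℂ =>
          (p.1 + p.2 • B p.1 + p.2 ^ 2 • v, p.2 + p.2 ^ 2 * c)) '' (V ∩ D) ⊆ D' := by
  subst hD hD'
  obtain ⟨Cst, hCst, δψ, hδψpos, hRψ⟩ := hR
  obtain ⟨Cst', hCst', δψ', hδψ'pos, hRψ'⟩ := hR'
  have h4 : ∀ (t : ℝ) (z : EuclideanSpace ℂ (Fin n)), φ₄ (t • z) = t^4 * φ₄ z := by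
    intro t z; rw [← Complex.coe_smul]; exact hφ₄hom t z
  have h4' : ∀ (t : ℝ) (z : EuclideanSpace ℂ (Fin n)), φ'₄ (t • z) = t^4 * φ'₄ z := by
    intro t z; rw [← Complex.coe_smul]; exact hφ'₄hom t z
  obtain ⟨C1, hC10, hC1⟩ := hom_bound φ₄ hφ₄smooth.continuous h4
  obtain ⟨Cg, hCg0, hCg⟩ := quartic_diff φ'₄ hφ'₄smooth h4'
  obtain ⟨ε, hε, hG⟩ := eps_min n φ₄ φ'₄ hφ₄smooth.continuous hφ'₄smooth.continuous
    hφ₄hom hφ'₄hom B c hc hstrict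
  obtain ⟨K, hKdef⟩ : ∃ x : ℝ, x = ‖B‖ + ‖v‖ + ‖c‖ + Cst + Cst' + C1 + Cg + 1 := ⟨_, rfl⟩
  have hBn : (0:ℝ) ≤ ‖B‖ := norm_nonneg _
  have hvn : (0:ℝ) ≤ ‖v‖ := norm_nonneg _
  have hcn : (0:ℝ) ≤ ‖c‖ := norm_nonneg _
  have hK1 : 1 ≤ K := by
    rw [hKdef]; linarith only [hBn, hvn, hcn, hCst.le, hCst'.le, hC10, hCg0]
  have hK0 : 0 < K := by linarith only [hK1]
  have hB_K : ‖B‖ ≤ K := by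
    rw [hKdef]; linarith only [hBn, hvn, hcn, hCst.le, hCst'.le, hC10, hCg0]
  have hv_K : ‖v‖ ≤ K := by
    rw [hKdef]; linarith only [hBn, hvn, hcn, hCst.le, hCst'.le, hC10, hCg0]
  have hc_K : ‖c‖ ≤ K := by
    rw [hKdef]; linarith only [hBn, hvn, hcn, hCst.le, hCst'.le, hC10, hCg0]
  have hCst_K : Cst ≤ K := by
    rw [hKdef]; linarith only [hBn, hvn, hcn, hCst.le, hCst'.le, hC10, hCg0]
  have hCst'_K : Cst' ≤ K := by
    rw [hKdef]; linarith only [hBn, hvn, hcn, hCst.le, hCst'.le, hC10, hCg0]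
  have hC1_K : C1 ≤ K := by
    rw [hKdef]; linarith only [hBn, hvn, hcn, hCst.le, hCst'.le, hC10, hCg0]
  have hCg_K : Cg ≤ K := by
    rw [hKdef]; linarith only [hBn, hvn, hcn, hCst.le, hCst'.le, hC10, hCg0]
  obtain ⟨μ, hμdef⟩ : ∃ x : ℝ, x = min (1/2) (ε/2) := ⟨_, rfl⟩
  have hμ0 : 0 < μ := by rw [hμdef]; exact lt_min (by norm_num) (by linarith only [hε])
  have hμha : μ ≤ 1/2 := by rw [hμdef]; exact min_le_left _ _
  have hμhb : μ ≤ ε/2 := by rw [hμdef]; exact min_le_right _ _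
  -- choice of δ
  obtain ⟨δ, hδ0, hδ1, hδψlt, hδψ'lt, h36, h1842, h1e5⟩ :
      ∃ δ > (0:ℝ), δ ≤ 1 ∧ δ < δψ ∧ 2*δ + 8*K*δ^2 < δψ' ∧
      36*K*δ ≤ 1 ∧ 1842*K^2*δ ≤ 1 ∧ 100000*K^6*Real.sqrt δ ≤ μ := by
    have hbase : ∀ (f : ℝ → ℝ), ContinuousAt f 0 → f 0 = 0 → ∀ C : ℝ, 0 < C →
        ∀ᶠ d in 𝓝[>] (0:ℝ), f d < C := by
      intro f hf h0 C hC
      have h1 : Tendsto f (𝓝 0) (𝓝 0) := by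
        have h2 := hf.tendsto
        rwa [h0] at h2
      exact (h1.mono_left nhdsWithin_le_nhds).eventually_lt_const hC
    have e1 : ∀ᶠ d in 𝓝[>] (0:ℝ), d < 1 :=
      hbase id continuousAt_id rfl 1 one_pos
    have e2 : ∀ᶠ d in 𝓝[>] (0:ℝ), d < δψ := hbase id continuousAt_id rfl δψ hδψpos
    have e3 : ∀ᶠ d in 𝓝[>] (0:ℝ), 2*d + 8*K*d^2 < δψ' := by
      apply hbase _ ?_ (by norm_num) δψ' hδψ'pos
      fun_prop
    have e4 : ∀ᶠ d in 𝓝[>] (0:ℝ), 36*K*d < 1 := by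
      apply hbase _ ?_ (by norm_num) 1 one_pos
      fun_prop
    have e5 : ∀ᶠ d in 𝓝[>] (0:ℝ), 1842*K^2*d < 1 := by
      apply hbase _ ?_ (by norm_num) 1 one_pos
      fun_prop
    have e6 : ∀ᶠ d in 𝓝[>] (0:ℝ), 100000*K^6*Real.sqrt d < μ := by
      apply hbase _ ?_ ?_ μ hμ0
      · exact (continuous_const.mul Real.continuous_sqrt).continuousAt
      · simp
    have epos : ∀ᶠ d in 𝓝[>] (0:ℝ), 0 < d :=
      eventually_mem_nhdsWithin.mono (fun x hx => hx)
    obtain ⟨d, hd⟩ := (epos.and (e1.and (e2.and (e3.and (e4.and (e5.and e6)))))).exists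
    exact ⟨d, hd.1, hd.2.1.le, hd.2.2.1, hd.2.2.2.1, hd.2.2.2.2.1.le, hd.2.2.2.2.2.1.le,
      hd.2.2.2.2.2.2.le⟩
  have hFcont : Continuous (fun p : EuclideanSpace ℂ (Fin n) × ℂ =>
      (p.1 + p.2 • B p.1 + p.2 ^ 2 • v, p.2 + p.2 ^ 2 * c)) := by
    apply Continuous.prodMk
    · exact (continuous_fst.add (continuous_snd.smul (B.continuous.comp continuous_fst))).add
        ((continuous_snd.pow 2).smul continuous_const)
    · exact continuous_snd.add ((continuous_snd.pow 2).mul continuous_const)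
  refine ⟨ball 0 δ ∩ U ∩ (fun p : EuclideanSpace ℂ (Fin n) × ℂ =>
      (p.1 + p.2 • B p.1 + p.2 ^ 2 • v, p.2 + p.2 ^ 2 * c)) ⁻¹' U',
    (isOpen_ball.inter hUopen).inter (hU'open.preimage hFcont),
    ⟨⟨mem_ball_self hδ0, hU0⟩, Set.mem_preimage.mpr (by convert hU'0 using 1; ext <;> simp)⟩,
    fun p hp => hp.1.2, ?_⟩
  rintro q ⟨⟨z, w⟩, ⟨⟨⟨hpball, hpU⟩, hpU'⟩, hpD⟩, rfl⟩
  simp only [Set.mem_setOf_eq] at hpD ⊢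
  refine ⟨hpU', ?_⟩
  have hineq : ‖z‖^2 + ψ (z, w.re) < w.im := by
    have := hpD.2
    norm_num at this ⊢
    exact this
  show ‖z + w • B z + w ^ 2 • v‖ ^ 2
      + ψ' (z + w • B z + w ^ 2 • v, (w + w ^ 2 * c).re) < (w + w ^ 2 * c).im
  -- basic quantities
  have hmδ : ‖z‖ < δ := lt_of_le_of_lt (norm_fst_le (z,w)) (mem_ball_zero_iff.mp hpball)
  have hWδ : ‖w‖ < δ := lt_of_le_of_lt (norm_snd_le (z,w)) (mem_ball_zero_iff.mp hpball)
  have hm0 : (0:ℝ) ≤ ‖z‖ := norm_nonneg z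
  have hW0 : (0:ℝ) ≤ ‖w‖ := norm_nonneg w
  have hWδ' : ‖w‖ ≤ δ := hWδ.le
  have huW : |w.re| ≤ ‖w‖ := by
    exact Complex.abs_re_le_norm w
  have htW : |w.im| ≤ ‖w‖ := by
    exact Complex.abs_im_le_norm w
  have huδ : |w.re| < δ := huW.trans_lt hWδ
  obtain ⟨s, hsdef⟩ : ∃ x : ℝ, x = w.im - ‖z‖^2 - ψ (z, w.re) := ⟨_, rfl⟩
  have hs0 : 0 < s := by rw [hsdef]; linarith only [hineq]
  obtain ⟨N, hNdef⟩ : ∃ x : ℝ, x = ‖z‖^4 + w.re^2 + s := ⟨_, rfl⟩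
  have hP40 : (0:ℝ) ≤ ‖z‖^4 + w.re^2 := by positivity
  have hN0 : (0:ℝ) ≤ N := by rw [hNdef]; linarith only [hP40, hs0]
  have hP4N : ‖z‖^4 + w.re^2 ≤ N := by rw [hNdef]; linarith only [hs0]
  have hm4N : ‖z‖^4 ≤ N := by rw [hNdef]; linarith only [sq_nonneg w.re, hs0]
  have hu2N : w.re^2 ≤ N := by rw [hNdef]; linarith only [pow_nonneg hm0 4, hs0]
  have hsN : s ≤ N := by rw [hNdef]; linarith only [hP40]
  -- sqrt δ facts
  have hsd0 : (0:ℝ) ≤ Real.sqrt δ := Real.sqrt_nonneg δ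
  have hsd1 : Real.sqrt δ ≤ 1 := by
    rw [show (1:ℝ) = Real.sqrt 1 by simp]
    exact Real.sqrt_le_sqrt hδ1
  have hδ2le : δ^2 ≤ δ := by nlinarith only [hδ0, hδ1]
  have hδsd : δ ≤ Real.sqrt δ := by
    have h1 := Real.sqrt_le_sqrt hδ2le
    rwa [Real.sqrt_sq hδ0.le] at h1
  have hδ2sd : δ^2 ≤ Real.sqrt δ := le_trans hδ2le hδsd
  have hδ36 : δ ≤ 1/36 := by nlinarith only [h36, mul_nonneg (sub_nonneg.mpr hK1) hδ0.le]
  have hKδ1 : K*δ ≤ 1 := by linarith only [h36, mul_nonneg hK0.le hδ0.le]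
  have hKw1 : K*‖w‖ ≤ 1 := le_trans (mul_le_mul_of_nonneg_left hWδ' hK0.le) hKδ1
  -- inner product bounds
  have hBz : ‖B z‖ ≤ K*‖z‖ :=
    le_trans (B.le_opNorm z) (mul_le_mul_of_nonneg_right hB_K hm0)
  have hinBz : ‖(⟪B z, z⟫ : ℂ)‖ ≤ K*‖z‖^2 := by
    calc ‖(⟪B z, z⟫ : ℂ)‖ ≤ ‖B z‖*‖z‖ := norm_inner_le_norm _ _
      _ ≤ (K*‖z‖)*‖z‖ := mul_le_mul_of_nonneg_right hBz hm0
      _ = K*‖z‖^2 := by ring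
  have hbe : |(⟪B z, z⟫ : ℂ).im| ≤ K*‖z‖^2 := by
    refine le_trans ?_ hinBz
    exact Complex.abs_im_le_norm _
  have hcre : |c.re| ≤ K := by
    refine le_trans ?_ hc_K; exact Complex.abs_re_le_norm c
  have hcim : |c.im| ≤ K := by
    refine le_trans ?_ hc_K; exact Complex.abs_im_le_norm c
  -- remainder of ψ at (z, w.re)
  have hψ4 : |ψ (z, w.re) - φ₄ z| ≤ Cst * (‖z‖ + Real.sqrt |w.re|)^5 :=
    hRψ z w.re (hmδ.trans hδψlt) (huδ.trans hδψlt)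
  have hsqu : Real.sqrt |w.re| ≤ Real.sqrt δ := Real.sqrt_le_sqrt huδ.le
  have hsq4 : (Real.sqrt |w.re|)^4 = w.re^2 := by
    have h : (Real.sqrt |w.re|)^4 = ((Real.sqrt |w.re|)^2)^2 := by ring
    rw [h, Real.sq_sqrt (abs_nonneg _), sq_abs]
  have hsq5 : (Real.sqrt |w.re|)^5 ≤ Real.sqrt δ * w.re^2 := by
    have h5 : (Real.sqrt |w.re|)^5 = (Real.sqrt |w.re|)^4 * Real.sqrt |w.re| := by ring
    rw [h5, hsq4]
    calc w.re^2 * Real.sqrt |w.re| ≤ w.re^2 * Real.sqrt δ :=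
          mul_le_mul_of_nonneg_left hsqu (sq_nonneg _)
      _ = Real.sqrt δ * w.re^2 := mul_comm _ _
  have hm5 : ‖z‖^5 ≤ Real.sqrt δ * ‖z‖^4 := by
    have h : ‖z‖^5 = ‖z‖^4*‖z‖ := by ring
    rw [h]
    calc ‖z‖^4*‖z‖ ≤ ‖z‖^4*δ := mul_le_mul_of_nonneg_left hmδ.le (by positivity)
      _ ≤ ‖z‖^4*Real.sqrt δ := mul_le_mul_of_nonneg_left hδsd (by positivity)
      _ = Real.sqrt δ*‖z‖^4 := mul_comm _ _
  have bd1 : |ψ (z, w.re) - φ₄ z| ≤ 16*K*Real.sqrt δ*(‖z‖^4 + w.re^2) := by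
    calc |ψ (z, w.re) - φ₄ z| ≤ Cst * (‖z‖ + Real.sqrt |w.re|)^5 := hψ4
      _ ≤ K * (16*(Real.sqrt δ*‖z‖^4 + Real.sqrt δ*w.re^2)) := by
          apply mul_le_mul hCst_K _ (by positivity) hK0.le
          calc (‖z‖ + Real.sqrt |w.re|)^5 ≤ 16*(‖z‖^5 + (Real.sqrt |w.re|)^5) :=
                pow5_add _ _ hm0 (Real.sqrt_nonneg _)
            _ ≤ 16*(Real.sqrt δ*‖z‖^4 + Real.sqrt δ*w.re^2) := by linarith [hm5, hsq5]
      _ = 16*K*Real.sqrt δ*(‖z‖^4 + w.re^2) := by ring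
  have hφ4b : |φ₄ z| ≤ K*‖z‖^4 :=
    le_trans (hC1 z) (mul_le_mul_of_nonneg_right hC1_K (by positivity))
  have hKsd16 : 16*K*Real.sqrt δ*(‖z‖^4 + w.re^2) ≤ 16*K*(‖z‖^4 + w.re^2) := by
    linarith only [mul_nonneg (mul_nonneg hK0.le hP40) (sub_nonneg.mpr hsd1)]
  have hpsb0 : |ψ (z, w.re)| ≤ 17*K*(‖z‖^4 + w.re^2) := by
    calc |ψ (z, w.re)| = |(ψ (z, w.re) - φ₄ z) + φ₄ z| := by rw [sub_add_cancel]
      _ ≤ |ψ (z, w.re) - φ₄ z| + |φ₄ z| := abs_add_le _ _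
      _ ≤ 16*K*(‖z‖^4 + w.re^2) + K*‖z‖^4 := by linarith [bd1, hKsd16, hφ4b]
      _ ≤ 17*K*(‖z‖^4 + w.re^2) := by linarith only [mul_nonneg hK0.le (sq_nonneg w.re)]
  have hu2δ : w.re^2 ≤ δ^2 := by nlinarith only [abs_nonneg w.re, sq_abs w.re, huδ]
  have hδ21 : δ^2 ≤ 1 := by nlinarith only [hδ0, hδ1]
  have hm4δ : ‖z‖^4 ≤ δ^2 := by
    have h1 : ‖z‖^4 ≤ δ^4 := pow_le_pow_left₀ hm0 hmδ.le 4
    nlinarith only [h1, hδ21, sq_nonneg δ]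
  have hpsδ2 : |ψ (z, w.re)| ≤ 34*K*δ^2 := by
    calc |ψ (z, w.re)| ≤ 17*K*(‖z‖^4 + w.re^2) := hpsb0
      _ ≤ 17*K*(δ^2 + δ^2) := by
          apply mul_le_mul_of_nonneg_left _ (by linarith only [hK0] : (0:ℝ) ≤ 17*K)
          linarith only [hm4δ, hu2δ]
      _ = 34*K*δ^2 := by ring
  have hKδδ : 34*K*δ^2 ≤ δ := by
    linarith only [mul_le_mul_of_nonneg_right h36 hδ0.le, mul_nonneg (mul_nonneg hK0.le hδ0.le) hδ0.le]
  have hsδ : s ≤ 2*δ := by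
    have h1 : w.im ≤ δ := le_trans (le_abs_self _) (htW.trans hWδ.le)
    have h2 : -(ψ (z, w.re)) ≤ 34*K*δ^2 := by
      have := abs_le.mp hpsδ2
      linarith [this.1]
    rw [hsdef]
    linarith only [h1, h2, sq_nonneg ‖z‖, hKδδ]
  -- |ψ + s| bounds
  have hpsb : |ψ (z, w.re)| ≤ 17*K*N :=
    le_trans hpsb0 (by
      linarith only [mul_le_mul_of_nonneg_left hP4N
        (by linarith only [hK0] : (0:ℝ) ≤ 17*K)])
  have hpssumN : |ψ (z, w.re) + s| ≤ 18*K*N := by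
    calc |ψ (z, w.re) + s| ≤ |ψ (z, w.re)| + |s| := abs_add_le _ _
      _ = |ψ (z, w.re)| + s := by rw [abs_of_pos hs0]
      _ ≤ 17*K*N + s := by linarith only [hpsb]
      _ ≤ 18*K*N := by linarith only [mul_nonneg (sub_nonneg.mpr hK1) hN0, hsN]
  have hpssumδ : |ψ (z, w.re) + s| ≤ 36*K*δ := by
    calc |ψ (z, w.re) + s| ≤ |ψ (z, w.re)| + |s| := abs_add_le _ _
      _ = |ψ (z, w.re)| + s := by rw [abs_of_pos hs0]
      _ ≤ 34*K*δ^2 + 2*δ := by linarith only [hpsδ2, hsδ]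
      _ ≤ 36*K*δ := by
          linarith only [mul_le_mul_of_nonneg_left hδ2le hK0.le,
            mul_nonneg (sub_nonneg.mpr hK1) hδ0.le]
  -- w.im² and ‖w‖² bounds
  have hteq : w.im = ‖z‖^2 + ψ (z, w.re) + s := by rw [hsdef]; ring
  have hKd2 : 1734*K^2*δ^2 ≤ 1 := by
    linarith only [h1842, mul_le_mul_of_nonneg_left hδ2le (by positivity : (0:ℝ) ≤ 1734*K^2),
      mul_nonneg (sq_nonneg K) hδ0.le]
  have hKd3 : 578*K^2*δ^2 ≤ 1/3 := by linarith only [hKd2]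
  have hps2 : (ψ (z, w.re))^2 ≤ (34*K*δ^2)*(17*K*(‖z‖^4 + w.re^2)) := by
    have h := mul_le_mul hpsδ2 hpsb0 (abs_nonneg _)
      (mul_nonneg (mul_nonneg (by norm_num : (0:ℝ) ≤ 34) hK0.le) (sq_nonneg δ))
    calc (ψ (z, w.re))^2 = |ψ (z, w.re)| * |ψ (z, w.re)| := by
          rw [abs_mul_abs_self]; ring
      _ ≤ (34*K*δ^2)*(17*K*(‖z‖^4 + w.re^2)) := h
  have hs2b : s^2 ≤ 2*δ*s := by nlinarith only [hsδ, hs0]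
  have h3m : 578*K^2*δ^2*(‖z‖^4 + w.re^2) ≤ (1/3)*(‖z‖^4 + w.re^2) :=
    mul_le_mul_of_nonneg_right hKd3 hP40
  have h6δs : 6*δ*s ≤ s := by nlinarith only [hδ36, hs0]
  have hti2 : w.im^2 ≤ 4*N := by
    calc w.im^2 = (‖z‖^2 + ψ (z, w.re) + s)^2 := by rw [hteq]
      _ ≤ 4*N := by
          nlinarith only [hps2, hs2b, h3m, h6δs, sq_nonneg (‖z‖^2 - ψ (z, w.re)),
            sq_nonneg (‖z‖^2 - s), sq_nonneg (ψ (z, w.re) - s), hP4N, hs0,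
            sq_nonneg w.re, hNdef]
  have hW2 : ‖w‖^2 ≤ 5*N := by
    have hW2eq : ‖w‖^2 = w.re^2 + w.im^2 := by
      rw [Complex.sq_norm, Complex.normSq_apply]; ring
    linarith only [hW2eq, hti2, hu2N]
  -- bound on the correction term
  have hr : ‖w • B z + w^2 • v‖ ≤ K*‖w‖*‖z‖ + K*‖w‖^2 := by
    calc ‖w • B z + w^2 • v‖ ≤ ‖w • B z‖ + ‖w^2 • v‖ := norm_add_le _ _
      _ = ‖w‖*‖B z‖ + ‖w^2‖*‖v‖ := by rw [norm_smul, norm_smul]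
      _ = ‖w‖*‖B z‖ + ‖w‖^2*‖v‖ := by rw [norm_pow]
      _ ≤ ‖w‖*(K*‖z‖) + ‖w‖^2*K := by
          have g1 : ‖w‖*‖B z‖ ≤ ‖w‖*(K*‖z‖) := mul_le_mul_of_nonneg_left hBz hW0
          have g2 : ‖w‖^2*‖v‖ ≤ ‖w‖^2*K := mul_le_mul_of_nonneg_left hv_K (sq_nonneg _)
          linarith
      _ = K*‖w‖*‖z‖ + K*‖w‖^2 := by ring
  have hr0 : (0:ℝ) ≤ ‖w • B z + w^2 • v‖ := norm_nonneg _
  have ha1 : ‖w‖*‖z‖ ≤ δ*δ := mul_le_mul hWδ' hmδ.le hm0 hδ0.le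
  have ha2 : ‖w‖^2 ≤ δ^2 := by nlinarith only [hWδ', hW0]
  have hrδ : ‖w • B z + w^2 • v‖ ≤ 2*K*δ^2 := by
    linarith only [hr, mul_le_mul_of_nonneg_left ha1 hK0.le,
      mul_le_mul_of_nonneg_left ha2 hK0.le]
  -- the two exact computations
  have f1 : (w + w^2*c).im
      = w.im + ((w.re*w.re - w.im*w.im)*c.im + (w.re*w.im + w.im*w.re)*c.re) := by
    simp [Complex.add_im, Complex.mul_im, Complex.mul_re, sq]
  have f3 : ‖z + w • B z + w^2 • v‖^2 = ‖z‖^2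
      + 2*(w.re*(⟪B z, z⟫).re + w.im*(⟪B z, z⟫).im + (w^2*⟪z,v⟫).re)
      + ‖w • B z + w^2 • v‖^2 := by
    rw [add_assoc]
    have e2 := @norm_add_sq ℂ _ _ _ _ z (w • B z + w^2 • v)
    simp only [RCLike.re_to_complex] at e2
    rw [e2]
    have e0 : (⟪z, w • B z + w^2 • v⟫ : ℂ) = w*⟪z, B z⟫ + w^2*⟪z,v⟫ := by
      rw [inner_add_right, inner_smul_right, inner_smul_right]
    rw [e0]
    have hcs : (⟪z, B z⟫ : ℂ) = starRingEnd ℂ ⟪B z, z⟫ := (inner_conj_symm _ _).symm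
    rw [Complex.add_re, Complex.mul_re, hcs]
    simp only [Complex.conj_re, Complex.conj_im]
    ring
  have hid : (w + w^2*c).im
      - (‖z + w • B z + w^2 • v‖^2 + ψ' (z + w • B z + w^2 • v, (w + w^2*c).re))
      = s + (c.im*w.re^2 - 2*w.re*((⟪B z, z⟫).re - ‖z‖^2*c.re)
          + (φ₄ z - φ'₄ z - 2*‖z‖^2*(⟪B z, z⟫).im - ‖z‖^4*c.im))
        + ((ψ (z, w.re) - φ₄ z)
          + 2*w.re*(ψ (z, w.re)+s)*c.re
          - ((ψ (z, w.re)+s)^2 + 2*‖z‖^2*(ψ (z, w.re)+s))*c.im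
          - 2*(ψ (z, w.re)+s)*(⟪B z, z⟫).im
          - 2*(w^2*⟪z, v⟫).re
          - ‖w • B z + w^2 • v‖^2
          - (ψ' (z + w • B z + w^2 • v, (w + w^2*c).re) - φ'₄ (z + w • B z + w^2 • v))
          - (φ'₄ (z + w • B z + w^2 • v) - φ'₄ z)) := by
    rw [f1, f3, hteq]; ring
  -- error bounds bd2-bd8
  have bd2 : |2*w.re*(ψ (z, w.re)+s)*c.re| ≤ 36*K^2*δ*N := by
    rw [abs_mul, abs_mul, abs_mul, abs_two]
    calc 2*|w.re| * |ψ (z, w.re)+s| * |c.re| ≤ 2*δ*(18*K*N)*K := by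
          apply mul_le_mul _ hcre (abs_nonneg _)
            (mul_nonneg (by linarith only [hδ0] : (0:ℝ) ≤ 2*δ)
              (by nlinarith only [hK0, hN0] : (0:ℝ) ≤ 18*K*N))
          apply mul_le_mul (by linarith only [huδ]) hpssumN (abs_nonneg _)
            (by linarith only [hδ0])
      _ = 36*K^2*δ*N := by ring
  have h36Kδ0 : (0:ℝ) ≤ 36*K*δ := by
    linarith only [mul_nonneg hK0.le hδ0.le]
  have h18KN0 : (0:ℝ) ≤ 18*K*N := by
    linarith only [mul_nonneg hK0.le hN0]
  have bd3 : |((ψ (z, w.re)+s)^2 + 2*‖z‖^2*(ψ (z, w.re)+s))*c.im| ≤ 684*K^3*δ*N := by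
    rw [abs_mul]
    have e2 : |(ψ (z, w.re)+s)^2| = |ψ (z, w.re)+s|^2 := abs_pow _ 2
    have e3 : |2*‖z‖^2*(ψ (z, w.re)+s)| = 2*‖z‖^2*|ψ (z, w.re)+s| := by
      rw [abs_mul, abs_mul, abs_two, abs_of_nonneg (sq_nonneg ‖z‖)]
    have e4 : |ψ (z, w.re)+s|^2 ≤ (36*K*δ)*(18*K*N) := by
      rw [pow_two]
      exact mul_le_mul hpssumδ hpssumN (abs_nonneg _) h36Kδ0
    have g2 : 2*‖z‖^2*|ψ (z, w.re)+s| ≤ (2*δ^2)*(18*K*N) := by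
      apply mul_le_mul _ hpssumN (abs_nonneg _) (by positivity)
      nlinarith only [hmδ, hm0]
    have h1 : |(ψ (z, w.re)+s)^2 + 2*‖z‖^2*(ψ (z, w.re)+s)|
        ≤ (36*K*δ)*(18*K*N) + (2*δ^2)*(18*K*N) := by
      calc |(ψ (z, w.re)+s)^2 + 2*‖z‖^2*(ψ (z, w.re)+s)|
          ≤ |(ψ (z, w.re)+s)^2| + |2*‖z‖^2*(ψ (z, w.re)+s)| := abs_add_le _ _
        _ ≤ (36*K*δ)*(18*K*N) + (2*δ^2)*(18*K*N) := by
            rw [e2, e3]; linarith only [e4, g2]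
    have t1 : K^2*N*δ^2 ≤ K^2*N*δ :=
      mul_le_mul_of_nonneg_left hδ2le (mul_nonneg (sq_nonneg K) hN0)
    have t2 : (K^2*δ*N)*1 ≤ (K^2*δ*N)*K :=
      mul_le_mul_of_nonneg_left hK1 (mul_nonneg (mul_nonneg (sq_nonneg K) hδ0.le) hN0)
    calc (|(ψ (z, w.re)+s)^2 + 2*‖z‖^2*(ψ (z, w.re)+s)|)*|c.im|
        ≤ ((36*K*δ)*(18*K*N) + (2*δ^2)*(18*K*N))*K := by
          apply mul_le_mul h1 hcim (abs_nonneg _)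
          exact add_nonneg (mul_nonneg h36Kδ0 h18KN0)
            (mul_nonneg (by positivity) h18KN0)
      _ ≤ 684*K^3*δ*N := by linarith only [t1, t2]
  have bd4 : |2*(ψ (z, w.re)+s)*(⟪B z, z⟫).im| ≤ 36*K^2*δ^2*N := by
    rw [abs_mul, abs_mul, abs_two]
    have hm2δ : ‖z‖^2 ≤ δ^2 := by nlinarith only [hmδ, hm0]
    calc 2*|ψ (z, w.re)+s| * |(⟪B z, z⟫).im| ≤ 2*(18*K*N)*(K*δ^2) := by
          apply mul_le_mul _ (le_trans hbe (mul_le_mul_of_nonneg_left hm2δ hK0.le))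
            (abs_nonneg _) (by nlinarith only [hK0, hN0] : (0:ℝ) ≤ 2*(18*K*N))
          apply mul_le_mul le_rfl hpssumN (abs_nonneg _) (by norm_num)
      _ = 36*K^2*δ^2*N := by ring
  have bd5 : |2*(w^2*⟪z, v⟫).re| ≤ 10*K*δ*N := by
    rw [abs_mul, abs_two]
    have h1 : |(w^2*⟪z, v⟫).re| ≤ ‖w‖^2*(‖z‖*‖v‖) := by
      calc |(w^2*⟪z, v⟫).re| ≤ ‖w^2*⟪z, v⟫‖ := by
            exact Complex.abs_re_le_norm _
        _ = ‖w‖^2*‖(⟪z, v⟫ : ℂ)‖ := by rw [norm_mul, norm_pow]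
        _ ≤ ‖w‖^2*(‖z‖*‖v‖) := mul_le_mul_of_nonneg_left (norm_inner_le_norm _ _) (sq_nonneg _)
    calc 2*|(w^2*⟪z, v⟫).re| ≤ 2*(‖w‖^2*(‖z‖*‖v‖)) := by linarith only [h1]
      _ ≤ 2*((5*N)*(δ*K)) := by
          apply mul_le_mul_of_nonneg_left _ (by norm_num)
          apply mul_le_mul hW2 (mul_le_mul hmδ.le hv_K hvn hδ0.le)
            (mul_nonneg hm0 hvn) (by linarith only [hN0])
      _ = 10*K*δ*N := by ring
  have bd6 : ‖w • B z + w^2 • v‖^2 ≤ 20*K^2*δ^2*N := by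
    have h1 : ‖w • B z + w^2 • v‖ ≤ K*‖w‖*(‖z‖+‖w‖) := by
      calc ‖w • B z + w^2 • v‖ ≤ K*‖w‖*‖z‖ + K*‖w‖^2 := hr
        _ = K*‖w‖*(‖z‖+‖w‖) := by ring
    have h2 : ‖w • B z + w^2 • v‖^2 ≤ (K*‖w‖*(‖z‖+‖w‖))^2 := by
      apply pow_le_pow_left₀ hr0 h1
    have hzw2δ : ‖z‖+‖w‖ ≤ 2*δ := by linarith only [hmδ, hWδ']
    have h3 : (‖z‖+‖w‖)^2 ≤ 4*δ^2 := by nlinarith only [hzw2δ, hm0, hW0]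
    calc ‖w • B z + w^2 • v‖^2 ≤ (K*‖w‖*(‖z‖+‖w‖))^2 := h2
      _ = K^2*(‖w‖^2*(‖z‖+‖w‖)^2) := by ring
      _ ≤ K^2*((5*N)*(4*δ^2)) := by
          apply mul_le_mul_of_nonneg_left _ (sq_nonneg K)
          exact mul_le_mul hW2 h3 (sq_nonneg _) (by linarith only [hN0])
      _ = 20*K^2*δ^2*N := by ring
  -- bd7 : the remainder ψ' at the image point
  have hz'norm : ‖z + w • B z + w^2 • v‖ ≤ ‖z‖ + 2*K*δ^2 := by
    calc ‖z + w • B z + w^2 • v‖ = ‖z + (w • B z + w^2 • v)‖ := by rw [add_assoc]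
      _ ≤ ‖z‖ + ‖w • B z + w^2 • v‖ := norm_add_le _ _
      _ ≤ ‖z‖ + 2*K*δ^2 := by linarith [hrδ]
  have hz'δ : ‖z + w • B z + w^2 • v‖ < δψ' := by
    have h1 : 2*K*δ^2 ≤ 8*K*δ^2 := by
      linarith only [mul_nonneg hK0.le (sq_nonneg δ)]
    linarith only [hz'norm, hmδ, hδψ'lt, hδ0, h1]
  have hw2c : ‖w^2*c‖ ≤ K*‖w‖^2 := by
    rw [norm_mul, norm_pow]
    calc ‖w‖^2*‖c‖ ≤ ‖w‖^2*K := mul_le_mul_of_nonneg_left hc_K (sq_nonneg _)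
      _ = K*‖w‖^2 := by ring
  have hu'b : |(w + w^2*c).re| ≤ |w.re| + K*‖w‖^2 := by
    rw [Complex.add_re]
    calc |w.re + (w^2*c).re| ≤ |w.re| + |(w^2*c).re| := abs_add_le _ _
      _ ≤ |w.re| + K*‖w‖^2 := by
          have h : |(w^2*c).re| ≤ ‖w^2*c‖ := by
            exact Complex.abs_re_le_norm _
          linarith [hw2c]
  have hu'δ : |(w + w^2*c).re| < δψ' := by
    have h1 : K*‖w‖^2 ≤ K*δ^2 := mul_le_mul_of_nonneg_left ha2 hK0.le
    have h2 : K*δ^2 ≤ 8*K*δ^2 := by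
      linarith only [mul_nonneg hK0.le (sq_nonneg δ)]
    linarith only [hu'b, huδ, hδψ'lt, hδ0, h1, h2]
  have hψ'4 := hRψ' (z + w • B z + w^2 • v) ((w + w^2*c).re) hz'δ hu'δ
  have hsqK1 : 1 ≤ Real.sqrt K := by
    rw [show (1:ℝ) = Real.sqrt 1 by simp]
    exact Real.sqrt_le_sqrt hK1
  have hKsqK : Real.sqrt K ≤ K := by
    nlinarith only [Real.sq_sqrt hK0.le, Real.sqrt_nonneg K, hsqK1]
  have hsqrtu' : Real.sqrt |(w + w^2*c).re| ≤ Real.sqrt |w.re| + K*‖w‖ := by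
    have h1 : |(w + w^2*c).re| ≤ (Real.sqrt |w.re| + K*‖w‖)^2 := by
      have e1 : (Real.sqrt |w.re| + K*‖w‖)^2
          = |w.re| + 2*Real.sqrt |w.re| *(K*‖w‖) + (K*‖w‖)^2 := by
        rw [add_sq, Real.sq_sqrt (abs_nonneg _)]
      have hKsq : K ≤ K^2 := by nlinarith only [hK1, hK0]
      have h2 : K*‖w‖^2 ≤ K^2*‖w‖^2 := mul_le_mul_of_nonneg_right hKsq (sq_nonneg _)
      nlinarith only [hu'b, h2, e1,
        mul_nonneg (Real.sqrt_nonneg |w.re|) (mul_nonneg hK0.le hW0)]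
    calc Real.sqrt |(w + w^2*c).re| ≤ Real.sqrt ((Real.sqrt |w.re| + K*‖w‖)^2) :=
          Real.sqrt_le_sqrt h1
      _ = Real.sqrt |w.re| + K*‖w‖ := Real.sqrt_sq (by positivity)
  have ha : K*‖w‖*‖z‖ ≤ ‖z‖ := by
    linarith only [mul_le_mul_of_nonneg_right hKw1 hm0]
  have hb : K*‖w‖^2 ≤ ‖w‖ := by
    nlinarith only [mul_le_mul_of_nonneg_right hKw1 hW0]
  have hL : ‖z + w • B z + w^2 • v‖ + Real.sqrt |(w + w^2*c).re|
      ≤ 2*K*(‖z‖ + Real.sqrt |w.re| + ‖w‖) := by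
    have h1 : ‖z + w • B z + w^2 • v‖ ≤ ‖z‖ + (K*‖w‖*‖z‖ + K*‖w‖^2) := by
      calc ‖z + w • B z + w^2 • v‖ = ‖z + (w • B z + w^2 • v)‖ := by rw [add_assoc]
        _ ≤ ‖z‖ + ‖w • B z + w^2 • v‖ := norm_add_le _ _
        _ ≤ ‖z‖ + (K*‖w‖*‖z‖ + K*‖w‖^2) := by linarith [hr]
    linarith only [h1, hsqrtu', ha, hb, Real.sqrt_nonneg |w.re|,
      mul_nonneg (sub_nonneg.mpr hK1) hm0,
      mul_nonneg (sub_nonneg.mpr hK1) hW0,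
      mul_nonneg (sub_nonneg.mpr hK1) (Real.sqrt_nonneg |w.re|)]
  have hδ3sd : δ^3 ≤ Real.sqrt δ := by
    linarith only [mul_le_mul_of_nonneg_right hδ2le hδ0.le, hδ2le, hδsd]
  have hm5N : ‖z‖^5 ≤ Real.sqrt δ*N :=
    le_trans hm5 (mul_le_mul_of_nonneg_left hm4N hsd0)
  have hsq5N : (Real.sqrt |w.re|)^5 ≤ Real.sqrt δ*N :=
    le_trans hsq5 (mul_le_mul_of_nonneg_left hu2N hsd0)
  have hw5N : ‖w‖^5 ≤ 5*(Real.sqrt δ*N) := by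
    have h1 : ‖w‖^3 ≤ δ^3 := pow_le_pow_left₀ hW0 hWδ' 3
    have h2 : ‖w‖^5 = ‖w‖^3*‖w‖^2 := by ring
    calc ‖w‖^5 = ‖w‖^3*‖w‖^2 := h2
      _ ≤ δ^3*(5*N) := mul_le_mul h1 hW2 (sq_nonneg _) (pow_nonneg hδ0.le 3)
      _ ≤ Real.sqrt δ*(5*N) := mul_le_mul_of_nonneg_right hδ3sd (by linarith only [hN0])
      _ = 5*(Real.sqrt δ*N) := by ring
  have bd7 : |ψ' (z + w • B z + w^2 • v, (w + w^2*c).re) - φ'₄ (z + w • B z + w^2 • v)|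
      ≤ 57344*K^6*(Real.sqrt δ*N) := by
    have hL5 : (‖z + w • B z + w^2 • v‖ + Real.sqrt |(w + w^2*c).re|)^5
        ≤ 57344*K^5*(Real.sqrt δ*N) := by
      calc (‖z + w • B z + w^2 • v‖ + Real.sqrt |(w + w^2*c).re|)^5
          ≤ (2*K*(‖z‖ + Real.sqrt |w.re| + ‖w‖))^5 :=
            pow_le_pow_left₀ (by positivity) hL 5
        _ = 32*K^5*((‖z‖ + Real.sqrt |w.re| + ‖w‖)^5) := by ring
        _ ≤ 32*K^5*(256*(‖z‖^5 + (Real.sqrt |w.re|)^5 + ‖w‖^5)) := by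
            apply mul_le_mul_of_nonneg_left
              (pow5_add3 _ _ _ hm0 (Real.sqrt_nonneg _) hW0)
              (mul_nonneg (by norm_num) (pow_nonneg hK0.le 5))
        _ ≤ 32*K^5*(256*(Real.sqrt δ*N + Real.sqrt δ*N + 5*(Real.sqrt δ*N))) := by
            apply mul_le_mul_of_nonneg_left _
              (mul_nonneg (by norm_num) (pow_nonneg hK0.le 5))
            linarith only [hm5N, hsq5N, hw5N]
        _ = 57344*K^5*(Real.sqrt δ*N) := by ring
    calc |ψ' (z + w • B z + w^2 • v, (w + w^2*c).re) - φ'₄ (z + w • B z + w^2 • v)|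
        ≤ Cst' * (‖z + w • B z + w^2 • v‖ + Real.sqrt |(w + w^2*c).re|)^5 := hψ'4
      _ ≤ K * (57344*K^5*(Real.sqrt δ*N)) := by
          apply mul_le_mul hCst'_K hL5 (by positivity) hK0.le
      _ = 57344*K^6*(Real.sqrt δ*N) := by ring
  -- bd8 : variation of φ'₄
  have hz'sub : (z + w • B z + w^2 • v) - z = w • B z + w^2 • v := by abel
  have bd8 : |φ'₄ (z + w • B z + w^2 • v) - φ'₄ z| ≤ 384*K^2*δ*N := by
    have h8 := hCg z (z + w • B z + w^2 • v)
    rw [hz'sub] at h8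
    have hrKw : ‖w • B z + w^2 • v‖ ≤ K*‖w‖*(‖z‖+‖w‖) := by
      calc ‖w • B z + w^2 • v‖ ≤ K*‖w‖*‖z‖ + K*‖w‖^2 := hr
        _ = K*‖w‖*(‖z‖+‖w‖) := by ring
    have hrD : ‖w • B z + w^2 • v‖ ≤ ‖z‖ + ‖w‖ := by
      nlinarith only [mul_le_mul_of_nonneg_right hKw1 (add_nonneg hm0 hW0), hrKw]
    have hcube : (‖z‖ + ‖w • B z + w^2 • v‖)^3 ≤ 8*(‖z‖+‖w‖)^3 := by
      have h1 : ‖z‖ + ‖w • B z + w^2 • v‖ ≤ 2*(‖z‖+‖w‖) := by linarith only [hrD, hW0]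
      calc (‖z‖ + ‖w • B z + w^2 • v‖)^3 ≤ (2*(‖z‖+‖w‖))^3 :=
            pow_le_pow_left₀ (by positivity) h1 3
        _ = 8*(‖z‖+‖w‖)^3 := by ring
    have h4pow : (‖z‖+‖w‖)^4 ≤ 48*N := by
      have h1 : (‖z‖+‖w‖)^4 ≤ 8*(‖z‖^4 + ‖w‖^4) := pow4_add _ _ hm0 hW0
      have h2 : ‖w‖^4 ≤ δ^2*(5*N) := by
        calc ‖w‖^4 = ‖w‖^2*‖w‖^2 := by ring
          _ ≤ δ^2*(5*N) := mul_le_mul ha2 hW2 (sq_nonneg _) (sq_nonneg δ)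
      have h3 : δ^2*(5*N) ≤ 5*N := by nlinarith only [hδ21, hN0]
      linarith only [h1, h2, h3, hm4N]
    calc |φ'₄ (z + w • B z + w^2 • v) - φ'₄ z|
        ≤ Cg * (‖z‖ + ‖w • B z + w^2 • v‖)^3 * ‖w • B z + w^2 • v‖ := h8
      _ ≤ K * (8*(‖z‖+‖w‖)^3) * (K*‖w‖*(‖z‖+‖w‖)) := by
          apply mul_le_mul _ hrKw hr0
            (mul_nonneg hK0.le (by positivity))
          apply mul_le_mul hCg_K hcube (by positivity) hK0.le
      _ = 8*K^2*‖w‖*(‖z‖+‖w‖)^4 := by ring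
      _ ≤ 8*K^2*δ*(48*N) := by
          have h1 : ‖w‖*(‖z‖+‖w‖)^4 ≤ δ*(48*N) :=
            mul_le_mul hWδ' h4pow (by positivity) hδ0.le
          linarith only [mul_le_mul_of_nonneg_left h1 (by positivity : (0:ℝ) ≤ 8*K^2)]
      _ = 384*K^2*δ*N := by ring
  -- conversion of all bounds to the master form  K^6*(√δ*N)
  have hsdN0 : (0:ℝ) ≤ Real.sqrt δ*N := mul_nonneg hsd0 hN0
  have hδN : δ*N ≤ Real.sqrt δ*N := mul_le_mul_of_nonneg_right hδsd hN0
  have hδ2N : δ^2*N ≤ Real.sqrt δ*N := mul_le_mul_of_nonneg_right hδ2sd hN0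
  have hKp : ∀ j : ℕ, j ≤ 6 → K^j ≤ K^6 := fun j hj => pow_le_pow_right₀ hK1 hj
  have c1 : 16*K*Real.sqrt δ*(‖z‖^4 + w.re^2) ≤ 16*(K^6*(Real.sqrt δ*N)) := by
    have h1 : Real.sqrt δ*(‖z‖^4 + w.re^2) ≤ Real.sqrt δ*N :=
      mul_le_mul_of_nonneg_left hP4N hsd0
    have h2 : K*(Real.sqrt δ*(‖z‖^4 + w.re^2)) ≤ K*(Real.sqrt δ*N) :=
      mul_le_mul_of_nonneg_left h1 hK0.le
    have h3 : K*(Real.sqrt δ*N) ≤ K^6*(Real.sqrt δ*N) := by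
      apply mul_le_mul_of_nonneg_right _ hsdN0
      calc K = K^1 := (pow_one K).symm
        _ ≤ K^6 := hKp 1 (by norm_num)
    linarith only [h2, h3]
  have cgen : ∀ j : ℕ, j ≤ 6 → K^j*(δ*N) ≤ K^6*(Real.sqrt δ*N) := by
    intro j hj
    calc K^j*(δ*N) ≤ K^j*(Real.sqrt δ*N) :=
          mul_le_mul_of_nonneg_left hδN (pow_nonneg hK0.le j)
      _ ≤ K^6*(Real.sqrt δ*N) := mul_le_mul_of_nonneg_right (hKp j hj) hsdN0
  have cgen2 : ∀ j : ℕ, j ≤ 6 → K^j*(δ^2*N) ≤ K^6*(Real.sqrt δ*N) := by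
    intro j hj
    calc K^j*(δ^2*N) ≤ K^j*(Real.sqrt δ*N) :=
          mul_le_mul_of_nonneg_left hδ2N (pow_nonneg hK0.le j)
      _ ≤ K^6*(Real.sqrt δ*N) := mul_le_mul_of_nonneg_right (hKp j hj) hsdN0
  have c2 : 36*K^2*δ*N ≤ 36*(K^6*(Real.sqrt δ*N)) := by
    linarith only [cgen 2 (by norm_num)]
  have c3 : 684*K^3*δ*N ≤ 684*(K^6*(Real.sqrt δ*N)) := by
    linarith only [cgen 3 (by norm_num)]
  have c4 : 36*K^2*δ^2*N ≤ 36*(K^6*(Real.sqrt δ*N)) := by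
    linarith only [cgen2 2 (by norm_num)]
  have c5 : 10*K*δ*N ≤ 10*(K^6*(Real.sqrt δ*N)) := by
    linarith only [cgen 1 (by norm_num)]
  have c6 : 20*K^2*δ^2*N ≤ 20*(K^6*(Real.sqrt δ*N)) := by
    linarith only [cgen2 2 (by norm_num)]
  have c8 : 384*K^2*δ*N ≤ 384*(K^6*(Real.sqrt δ*N)) := by
    linarith only [cgen 2 (by norm_num)]
  -- lower bound on the error term
  have hGlow := hG z w.re
  have h100 : 100000*(K^6*(Real.sqrt δ*N)) ≤ μ*N := by
    have h := mul_le_mul_of_nonneg_right h1e5 hN0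
    linarith only [h]
  have hμ1 : μ*(‖z‖^4 + w.re^2) ≤ (ε/2)*(‖z‖^4 + w.re^2) :=
    mul_le_mul_of_nonneg_right hμhb hP40
  have hμ2 : μ*s ≤ (1/2)*s := mul_le_mul_of_nonneg_right hμha hs0.le
  have hμN : μ*N = μ*(‖z‖^4 + w.re^2) + μ*s := by rw [hNdef]; ring
  have habs1 := neg_abs_le (ψ (z, w.re) - φ₄ z)
  have habs2 := neg_abs_le (2*w.re*(ψ (z, w.re)+s)*c.re)
  have habs3 := le_abs_self (((ψ (z, w.re)+s)^2 + 2*‖z‖^2*(ψ (z, w.re)+s))*c.im)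
  have habs4 := le_abs_self (2*(ψ (z, w.re)+s)*(⟪B z, z⟫).im)
  have habs5 := le_abs_self (2*(w^2*⟪z, v⟫).re)
  have habs7 := le_abs_self (ψ' (z + w • B z + w^2 • v, (w + w^2*c).re)
    - φ'₄ (z + w • B z + w^2 • v))
  have habs8 := le_abs_self (φ'₄ (z + w • B z + w^2 • v) - φ'₄ z)
  have hX0 : (0:ℝ) ≤ K^6*(Real.sqrt δ*N) := mul_nonneg (pow_nonneg hK0.le 6) hsdN0
  have hεP4 : (0:ℝ) ≤ ε*(‖z‖^4 + w.re^2) := mul_nonneg hε.le hP40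
  linarith only [hid, hGlow, bd1, bd2, bd3, bd4, bd5, bd6, bd7, bd8,
    c1, c2, c3, c4, c5, c6, c8, h100, hμ1, hμ2, hμN, hX0, hεP4,
    habs1, habs2, habs3, habs4, habs5, habs7, habs8, hs0]
end

section
/- Let D ⊆ ℂ^{n+1} be a domain with 0 ∈ ∂D and let F : D → ℂ^m be holomorphic. Suppose there exist a point p' ∈ ℂ^m and a ℂ-linear map L : ℂ^{n+1} → ℂ^m such that for every sequence (Z_k) in D converging non-tangentially to 0 one has ‖F(Z_k) − p' − L(Z_k)‖ / ‖Z_k‖ → 0 as k → ∞ (i.e. L is the non-tangential differential of F at 0). Then for every sequence (Z_k) in D converging non-tangentially to 0, the differentials dF_{Z_k} converge to L in operator norm. -/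
/-!
Let `r_k` be the distance from `Z_k` to `∂D`. Non-tangential convergence makes `r_k` comparable
to `‖Z_k‖`, and every sequence chosen in the balls `B(Z_k, r_k / 2)` again converges
non-tangentially. Hence the error `G = F - p' - L` is `o(r_k)` uniformly on these balls, and the
Schwarz lemma turns this into `‖dG_{Z_k}‖ = o(1)`, i.e. `dF_{Z_k} → L`.
-/

open Metric Filter Topology

theorem IsPreconnected.subset_of_disjoint_frontier {X : Type*} [TopologicalSpace X]
    {s D : Set X} (hs : IsPreconnected s) (hsD : (s ∩ D).Nonempty)
    (hfr : Disjoint s (frontier D)) : s ⊆ D := by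
  have hcl : ∀ y ∈ s, y ∈ closure D → y ∈ interior D := fun y hy hyD => by
    by_contra hyi
    exact hfr.notMem_of_mem_left hy ⟨hyD, hyi⟩
  have hsub : s ⊆ interior D ∪ (closure D)ᶜ := fun y hy => by
    by_cases hyD : y ∈ closure D
    exacts [Or.inl (hcl y hy hyD), Or.inr hyD]
  obtain ⟨y, hys, hyD⟩ := hsD
  refine (hs.subset_left_of_subset_union isOpen_interior isClosed_closure.isOpen_compl
    (Disjoint.mono_left interior_subset_closure disjoint_compl_right) hsub
    ⟨y, hys, hcl y hys (subset_closure hyD)⟩).trans interior_subset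

theorem Filter.eventually_forall_lt_of_forall_tendsto {ι α : Type*} {l : Filter ι}
    {S : ι → Set α} (hS : ∀ i, (S i).Nonempty) {f : ι → α → ℝ}
    (h : ∀ V : ι → α, (∀ i, V i ∈ S i) → Tendsto (fun i => f i (V i)) l (𝓝 0))
    {ε : ℝ} (hε : 0 < ε) : ∀ᶠ i in l, ∀ x ∈ S i, f i x < ε := by
  have hbad : ∀ i, ∃ x ∈ S i, (∃ y ∈ S i, ε ≤ f i y) → ε ≤ f i x := fun i => by
    by_cases hi : ∃ y ∈ S i, ε ≤ f i y
    · obtain ⟨y, hy, hfy⟩ := hi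
      exact ⟨y, hy, fun _ => hfy⟩
    · exact ⟨(hS i).some, (hS i).some_mem, fun h' => absurd h' hi⟩
  choose V hVS hVbad using hbad
  filter_upwards [(h V hVS).eventually (gt_mem_nhds hε)] with i hi x hx
  by_contra! hfx
  exact (hVbad i ⟨x, hx, hfx⟩).not_gt hi

section Nontangential

variable {E : Type*} [NormedAddCommGroup E] {D : Set E}

def TendstoZeroNontangentially (D : Set E) (W : ℕ → E) : Prop :=
  (∀ k, W k ∈ D) ∧ Tendsto W atTop (𝓝 0) ∧
    ∃ c > 0, ∀ k, ‖W k‖ ≤ c * infDist (W k) (frontier D)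

theorem infDist_frontier_le_norm (h0 : (0 : E) ∈ frontier D) (x : E) :
    infDist x (frontier D) ≤ ‖x‖ := by
  simpa using infDist_le_dist_of_mem (x := x) h0

theorem infDist_frontier_pos (hD : IsOpen D) (hne : (frontier D).Nonempty) {x : E}
    (hx : x ∈ D) : 0 < infDist x (frontier D) :=
  (isClosed_frontier.notMem_iff_infDist_pos hne).mp fun hfr =>
    (hD.frontier_eq ▸ hfr).2 hx

theorem norm_le_of_dist_lt_half_infDist {s : Set E} {c : ℝ} {v z : E}
    (hz : ‖z‖ ≤ c * infDist z s) (hv : dist v z < infDist z s / 2) :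
    ‖v‖ ≤ (c + 1 / 2) * infDist z s := by
  have := norm_le_norm_add_norm_sub' v z
  rw [← dist_eq_norm] at this
  linarith

variable [NormedSpace ℝ E] {Z : ℕ → E}

theorem ball_infDist_frontier_subset {x : E} (hx : x ∈ D) :
    ball x (infDist x (frontier D)) ⊆ D := by
  rcases (ball x (infDist x (frontier D))).eq_empty_or_nonempty with hempty | hne
  · simp [hempty]
  refine isPreconnected_ball.subset_of_disjoint_frontier
    ⟨x, mem_ball_self (nonempty_ball.mp hne), hx⟩ ?_
  exact Set.disjoint_left.mpr fun y hy hyfr =>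
    (infDist_le_dist_of_mem hyfr).not_gt (by rwa [dist_comm, ← mem_ball])

theorem TendstoZeroNontangentially.of_dist_lt_half (h0 : (0 : E) ∈ frontier D)
    (hZ : TendstoZeroNontangentially D Z) {V : ℕ → E}
    (hV : ∀ k, dist (V k) (Z k) < infDist (Z k) (frontier D) / 2) :
    TendstoZeroNontangentially D V := by
  obtain ⟨hZD, hZ0, c, hc, hcZ⟩ := hZ
  have hnorm k := norm_le_of_dist_lt_half_infDist (hcZ k) (hV k)
  have hr k := infDist_frontier_le_norm h0 (Z k)
  refine ⟨fun k => ball_infDist_frontier_subset (hZD k) ?_, ?_, 2 * c + 1, by positivity,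
    fun k => ?_⟩
  · have := hV k
    rw [mem_ball]
    linarith [infDist_nonneg (x := Z k) (s := frontier D)]
  · have hle k : ‖V k‖ ≤ (c + 1 / 2) * ‖Z k‖ :=
      (hnorm k).trans (mul_le_mul_of_nonneg_left (hr k) (by linarith))
    exact squeeze_zero_norm hle (by simpa using hZ0.norm.const_mul (c + 1 / 2))
  · have hfar : infDist (Z k) (frontier D) ≤ infDist (V k) (frontier D) + dist (Z k) (V k) :=
      infDist_le_infDist_add_dist
    rw [dist_comm] at hfar
    nlinarith [hnorm k, hV k]

theorem TendstoZeroNontangentially.eventually_norm_le_on_half_ball {G : Type*}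
    [NormedAddCommGroup G] {g : E → G} (hD : IsOpen D) (h0 : (0 : E) ∈ frontier D)
    (hg : ∀ W, TendstoZeroNontangentially D W →
      Tendsto (fun k => ‖g (W k)‖ / ‖W k‖) atTop (𝓝 0))
    (hZ : TendstoZeroNontangentially D Z) {ε : ℝ} (hε : 0 < ε) :
    ∀ᶠ k in atTop, ∀ w ∈ ball (Z k) (infDist (Z k) (frontier D) / 2),
      ‖g w‖ ≤ ε * infDist (Z k) (frontier D) := by
  obtain ⟨c, -, hcZ⟩ := hZ.2.2
  have hr k : 0 < infDist (Z k) (frontier D) := infDist_frontier_pos hD ⟨0, h0⟩ (hZ.1 k)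
  have h0D : (0 : E) ∉ D := (hD.frontier_eq ▸ h0).2
  have hsmall : ∀ V : ℕ → E, (∀ k, V k ∈ ball (Z k) (infDist (Z k) (frontier D) / 2)) →
      Tendsto (fun k => ‖g (V k)‖ / infDist (Z k) (frontier D)) atTop (𝓝 0) := by
    intro V hV
    have hVnt := hZ.of_dist_lt_half h0 hV
    refine squeeze_zero (fun k => div_nonneg (norm_nonneg _) (hr k).le) (fun k => ?_)
      (by simpa only [mul_zero] using (hg V hVnt).const_mul (c + 1 / 2))
    have hVpos : 0 < ‖V k‖ := norm_pos_iff.mpr fun hV0 => h0D (hV0 ▸ hVnt.1 k)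
    have hVr : ‖V k‖ / infDist (Z k) (frontier D) ≤ c + 1 / 2 :=
      (div_le_iff₀ (hr k)).mpr (norm_le_of_dist_lt_half_infDist (hcZ k) (hV k))
    calc ‖g (V k)‖ / infDist (Z k) (frontier D)
        = ‖V k‖ / infDist (Z k) (frontier D) * (‖g (V k)‖ / ‖V k‖) := by field_simp
      _ ≤ (c + 1 / 2) * (‖g (V k)‖ / ‖V k‖) := by gcongr
  filter_upwards [eventually_forall_lt_of_forall_tendsto
    (S := fun k => ball (Z k) (infDist (Z k) (frontier D) / 2))
    (f := fun k w => ‖g w‖ / infDist (Z k) (frontier D))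
    (fun k => nonempty_ball.mpr (half_pos (hr k))) hsmall hε] with k hk w hw
  exact ((div_lt_iff₀ (hr k)).mp (hk w hw)).le

end Nontangential

theorem norm_fderiv_le_of_forall_norm_le {E G : Type*} [NormedAddCommGroup E]
    [NormedSpace ℂ E] [NormedAddCommGroup G] [NormedSpace ℂ G] {g : E → G} {z : E} {r M : ℝ}
    (hr : 0 < r) (hg : DifferentiableOn ℂ g (ball z r)) (hM : ∀ w ∈ ball z r, ‖g w‖ ≤ M) :
    ‖fderiv ℂ g z‖ ≤ 2 * M / r := by
  refine Complex.norm_fderiv_le_div_of_mapsTo_ball hg (fun w hw => ?_) hr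
  rw [mem_closedBall]
  linarith [dist_le_norm_add_norm (g w) (g z), hM w hw, hM z (mem_ball_self hr)]

theorem TendstoZeroNontangentially.tendsto_fderiv {E G : Type*} [NormedAddCommGroup E]
    [NormedSpace ℂ E] [NormedAddCommGroup G] [NormedSpace ℂ G] {D : Set E} {g : E → G}
    {Z : ℕ → E} (hD : IsOpen D) (h0 : (0 : E) ∈ frontier D) (hgD : DifferentiableOn ℂ g D)
    (hg : ∀ W, TendstoZeroNontangentially D W →
      Tendsto (fun k => ‖g (W k)‖ / ‖W k‖) atTop (𝓝 0))
    (hZ : TendstoZeroNontangentially D Z) :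
    Tendsto (fun k => fderiv ℂ g (Z k)) atTop (𝓝 0) := by
  refine Metric.tendsto_nhds.mpr fun ε hε => ?_
  filter_upwards [hZ.eventually_norm_le_on_half_ball hD h0 hg (ε := ε / 8) (by positivity)]
    with k hk
  have hr : 0 < infDist (Z k) (frontier D) := infDist_frontier_pos hD ⟨0, h0⟩ (hZ.1 k)
  have hball : ball (Z k) (infDist (Z k) (frontier D) / 2) ⊆ D :=
    (ball_subset_ball (half_le_self hr.le)).trans (ball_infDist_frontier_subset (hZ.1 k))
  rw [dist_zero_right]
  calc ‖fderiv ℂ g (Z k)‖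
      ≤ 2 * (ε / 8 * infDist (Z k) (frontier D)) / (infDist (Z k) (frontier D) / 2) :=
        norm_fderiv_le_of_forall_norm_le (half_pos hr) (hgD.mono hball) hk
    _ = ε / 2 := by field_simp; ring
    _ < ε := half_lt_self hε

theorem boundary_jets_stmt4_general (n m : ℕ)
    (D : Set (EuclideanSpace ℂ (Fin (n + 1))))
    (hDopen : IsOpen D)
    (h0 : (0 : EuclideanSpace ℂ (Fin (n + 1))) ∈ frontier D)
    (F : EuclideanSpace ℂ (Fin (n + 1)) → EuclideanSpace ℂ (Fin m))
    (hF : DifferentiableOn ℂ F D)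
    (p' : EuclideanSpace ℂ (Fin m))
    (L : EuclideanSpace ℂ (Fin (n + 1)) →L[ℂ] EuclideanSpace ℂ (Fin m))
    -- `L` is the non-tangential differential of `F` at `0`:
    (hL : ∀ W : ℕ → EuclideanSpace ℂ (Fin (n + 1)),
      (∀ k, W k ∈ D) → Tendsto W atTop (𝓝 0) →
      (∃ c > 0, ∀ k, ‖W k‖ ≤ c * infDist (W k) (frontier D)) →
      Tendsto (fun k => ‖F (W k) - p' - L (W k)‖ / ‖W k‖) atTop (𝓝 0))
    -- any sequence converging non-tangentially to `0`:
    (Z : ℕ → EuclideanSpace ℂ (Fin (n + 1)))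
    (hZD : ∀ k, Z k ∈ D) (hZ0 : Tendsto Z atTop (𝓝 0))
    (hZnt : ∃ c > 0, ∀ k, ‖Z k‖ ≤ c * infDist (Z k) (frontier D)) :
    Tendsto (fun k => fderiv ℂ F (Z k)) atTop (𝓝 L) := by
  set g := fun w => F w - p' - L w
  have hgD : DifferentiableOn ℂ g D := (hF.sub_const p').sub L.differentiableOn
  have hfderiv k : fderiv ℂ g (Z k) = fderiv ℂ F (Z k) - L :=
    (((hF.differentiableAt (hDopen.mem_nhds (hZD k))).hasFDerivAt.sub_const p').sub
      L.hasFDerivAt).fderiv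
  have hg := TendstoZeroNontangentially.tendsto_fderiv hDopen h0 hgD
    (fun W hW => hL W hW.1 hW.2.1 hW.2.2) ⟨hZD, hZ0, hZnt⟩
  simp only [hfderiv] at hg
  exact tendsto_sub_nhds_zero_iff.mp hg

/-- if `L` is the non-tangential differential of a holomorphic map `F` at the
boundary point `0`, then `dF_{Z_k} → L` (in operator norm) along every sequence converging
non-tangentially to `0`. -/
theorem boundary_jets_stmt4 (n m : ℕ)
    (D : Set (EuclideanSpace ℂ (Fin (n + 1))))
    (hDopen : IsOpen D) (hDconn : IsConnected D)
    (h0 : (0 : EuclideanSpace ℂ (Fin (n + 1))) ∈ frontier D)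
    (F : EuclideanSpace ℂ (Fin (n + 1)) → EuclideanSpace ℂ (Fin m))
    (hF : DifferentiableOn ℂ F D)
    (p' : EuclideanSpace ℂ (Fin m))
    (L : EuclideanSpace ℂ (Fin (n + 1)) →L[ℂ] EuclideanSpace ℂ (Fin m))
    -- `L` is the non-tangential differential of `F` at `0`:
    (hL : ∀ W : ℕ → EuclideanSpace ℂ (Fin (n + 1)),
      (∀ k, W k ∈ D) → Tendsto W atTop (𝓝 0) →
      (∃ c > 0, ∀ k, ‖W k‖ ≤ c * infDist (W k) (frontier D)) →
      Tendsto (fun k => ‖F (W k) - p' - L (W k)‖ / ‖W k‖) atTop (𝓝 0))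
    -- any sequence converging non-tangentially to `0`:
    (Z : ℕ → EuclideanSpace ℂ (Fin (n + 1)))
    (hZD : ∀ k, Z k ∈ D) (hZ0 : Tendsto Z atTop (𝓝 0))
    (hZnt : ∃ c > 0, ∀ k, ‖Z k‖ ≤ c * infDist (Z k) (frontier D)) :
    Tendsto (fun k => fderiv ℂ F (Z k)) atTop (𝓝 L) :=
  boundary_jets_stmt4_general n m D hDopen h0 F hF p' L hL Z hZD hZ0 hZnt
end

section
/- Let D ⊆ ℂⁿ be a bounded domain and p ∈ ∂D. Suppose that the closure of D contains no nontrivial analytic disc through p, i.e. every holomorphic map f : Δ → ℂⁿ with f(Δ) ⊆ closure(D) and p ∈ f(Δ) is constant. Then for every η with 0 < η < 1 and every open neighborhood U of p there exists an open neighborhood V of p such that every holomorphic map f : Δ → D with f(0) ∈ V satisfies f(ηΔ) ⊆ U. -/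
/-!
If the conclusion failed, there would be discs `f k : Δ → D` with `f k 0 → p`, each leaving `U`
somewhere on `ηΔ`. Since `D` is bounded, the Schwarz lemma makes the `f k` uniformly Lipschitz on
any smaller disc `ρΔ`, so by Arzelà–Ascoli a subsequence converges uniformly there. The limit is
holomorphic on `ρΔ`, takes values in `closure D` and sends `0` to `p`; rescaled to `Δ` it is an
analytic disc through `p`, hence constantly `p`. So the subsequence converges uniformly to `p` on
`ηΔ ⊆ ρΔ`, which contradicts its leaving `U`.
-/

open Metric Filter Topology Set
open scoped BoundedContinuousFunction

theorem exists_subseq_tendstoUniformlyOn_of_equicontinuousOn {X β : Type*} [TopologicalSpace X]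
    [MetricSpace β] {K : Set X} (hK : IsCompact K) {B : Set β} (hB : IsCompact B)
    {f : ℕ → X → β} (hf : EquicontinuousOn f K) (hfB : ∀ k, MapsTo (f k) K B) :
    ∃ g : X → β, ∃ φ : ℕ → ℕ, StrictMono φ ∧ TendstoUniformlyOn (f ∘ φ) g atTop K := by
  have : CompactSpace K := isCompact_iff_compactSpace.1 hK
  have hfK : Equicontinuous (K.domRestrict ∘ f) := (equicontinuous_restrict_iff f).2 hf
  let F : ℕ → K →ᵇ β := fun k => .mkOfCompact ⟨K.domRestrict (f k), hfK.continuous k⟩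
  obtain ⟨G, -, φ, hφ, hFG⟩ := (BoundedContinuousFunction.arzela_ascoli B hB (range F)
    (by rintro _ x ⟨k, rfl⟩; exact hfB k x.2)
    fun x₀ U hU => (hfK x₀ U hU).mono fun _ hx ⟨_, k, hk⟩ => hk ▸ hx k).tendsto_subseq
    fun k => subset_closure (mem_range_self k)
  refine ⟨Function.extend Subtype.val G (f 0), φ, hφ, ?_⟩
  rw [tendstoUniformlyOn_iff_tendstoUniformly_comp_coe, Function.extend_comp Subtype.val_injective]
  exact BoundedContinuousFunction.tendsto_iff_tendstoUniformly.1 hFG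

section

variable {E F : Type*} [NormedAddCommGroup E] [NormedSpace ℂ E]
  [NormedAddCommGroup F] [NormedSpace ℂ F]

theorem lipschitzOnWith_closedBall_of_differentiableOn {f : F → E} {c : F} {a : E} {r R M : ℝ}
    (hr : r < R) (hf : DifferentiableOn ℂ f (ball c R))
    (hM : MapsTo f (ball c R) (closedBall a M)) :
    LipschitzOnWith (2 * M / (R - r)).toNNReal f (closedBall c r) := by
  refine LipschitzOnWith.of_dist_le_mul fun x hx y hy => ?_
  have hyR : y ∈ ball c R := closedBall_subset_ball hr hy
  have hM0 : 0 ≤ M := nonempty_closedBall.1 ⟨_, hM hyR⟩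
  have hRr : 0 < R - r := sub_pos.2 hr
  have hdiam : ∀ z ∈ ball c R, dist (f z) (f y) ≤ 2 * M := fun z hz =>
    calc dist (f z) (f y) ≤ dist (f z) a + dist (f y) a := dist_triangle_right _ _ _
      _ ≤ 2 * M := by linarith [mem_closedBall.1 (hM hz), mem_closedBall.1 (hM hyR)]
  rw [Real.coe_toNNReal _ (by positivity)]
  -- Near `y`, apply the Schwarz lemma on `ball y (R - r)`; far from `y`, the diameter bound suffices.
  rcases lt_or_ge (dist x y) (R - r) with hxy | hxy
  · have hsub : ball y (R - r) ⊆ ball c R := ball_subset_ball' (by linarith [mem_closedBall.1 hy])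
    exact Complex.dist_le_div_mul_dist_of_mapsTo_ball (hf.mono hsub)
      (fun z hz => mem_closedBall.2 (hdiam z (hsub hz))) hxy
  · calc dist (f x) (f y) ≤ 2 * M := hdiam x (closedBall_subset_ball hr hx)
      _ = 2 * M / (R - r) * (R - r) := by field_simp
      _ ≤ 2 * M / (R - r) * dist x y := by gcongr

theorem exists_subseq_tendstoUniformlyOn_closedBall [ProperSpace E] [ProperSpace F]
    {f : ℕ → F → E} {c : F} {a : E} {r R M : ℝ} (hr : r < R)
    (hf : ∀ k, DifferentiableOn ℂ (f k) (ball c R))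
    (hM : ∀ k, MapsTo (f k) (ball c R) (closedBall a M)) :
    ∃ g : F → E, ∃ φ : ℕ → ℕ, StrictMono φ ∧
      TendstoUniformlyOn (f ∘ φ) g atTop (closedBall c r) :=
  exists_subseq_tendstoUniformlyOn_of_equicontinuousOn (isCompact_closedBall c r)
    (isCompact_closedBall a M)
    (LipschitzOnWith.uniformEquicontinuousOn f _
      fun k => lipschitzOnWith_closedBall_of_differentiableOn hr (hf k) (hM k)).equicontinuousOn
    fun k => (hM k).mono_left (closedBall_subset_ball hr)

def NoNontrivialDiscThrough (S : Set E) (p : E) : Prop :=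
  ∀ f : ℂ → E, DifferentiableOn ℂ f (ball 0 1) → f '' ball 0 1 ⊆ S → p ∈ f '' ball 0 1 →
    ∀ x ∈ ball (0 : ℂ) 1, ∀ y ∈ ball (0 : ℂ) 1, f x = f y

theorem NoNontrivialDiscThrough.eqOn_ball {S : Set E} {p : E} (hS : NoNontrivialDiscThrough S p)
    {ρ : ℝ} (hρ : 0 < ρ) {g : ℂ → E} (hg : DifferentiableOn ℂ g (ball 0 ρ))
    (hgS : MapsTo g (ball 0 ρ) S) (hg0 : g 0 = p) : EqOn g (fun _ => p) (ball 0 ρ) := by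
  have hρ' : (ρ : ℂ) ≠ 0 := Complex.ofReal_ne_zero.2 hρ.ne'
  have hscale : MapsTo (fun w : ℂ => (ρ : ℂ) * w) (ball 0 1) (ball 0 ρ) := fun w hw => by
    simpa [norm_mul, abs_of_pos hρ] using mul_lt_mul_of_pos_left (mem_ball_zero_iff.1 hw) hρ
  intro z hz
  have hz' : z / ρ ∈ ball (0 : ℂ) 1 := by
    rw [mem_ball_zero_iff, norm_div, Complex.norm_real, Real.norm_of_nonneg hρ.le,
      div_lt_one hρ]
    exact mem_ball_zero_iff.1 hz
  have h := hS (fun w => g (ρ * w)) (hg.comp (by fun_prop) hscale)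
    (image_subset_iff.2 (hgS.comp hscale)) ⟨0, mem_ball_self one_pos, by simpa using hg0⟩
    (z / ρ) hz' 0 (mem_ball_self one_pos)
  simpa [mul_div_cancel₀ z hρ', hg0] using h

theorem exists_subseq_tendstoUniformlyOn_const [ProperSpace E] {D : Set E}
    (hD : Bornology.IsBounded D) {p : E} (hDp : NoNontrivialDiscThrough (closure D) p) {ρ : ℝ}
    (hρ0 : 0 < ρ) (hρ1 : ρ < 1) {f : ℕ → ℂ → E} (hf : ∀ k, DifferentiableOn ℂ (f k) (ball 0 1))
    (hfD : ∀ k, MapsTo (f k) (ball 0 1) D) (hf0 : Tendsto (fun k => f k 0) atTop (𝓝 p)) :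
    ∃ φ : ℕ → ℕ, StrictMono φ ∧ TendstoUniformlyOn (f ∘ φ) (fun _ => p) atTop (ball 0 ρ) := by
  obtain ⟨M, hM⟩ := hD.subset_closedBall 0
  obtain ⟨g, φ, hφ, hfg⟩ := exists_subseq_tendstoUniformlyOn_closedBall hρ1 hf
    fun k => (hfD k).mono_right hM
  replace hfg := hfg.mono ball_subset_closedBall
  have hρ : ball (0 : ℂ) ρ ⊆ ball 0 1 := ball_subset_ball hρ1.le
  have hg : DifferentiableOn ℂ g (ball 0 ρ) := hfg.tendstoLocallyUniformlyOn.differentiableOn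
    (Eventually.of_forall fun k => (hf (φ k)).mono hρ) isOpen_ball
  have hgD : MapsTo g (ball 0 ρ) (closure D) := fun z hz =>
    mem_closure_of_tendsto (hfg.tendsto_at hz) (Eventually.of_forall fun k => hfD (φ k) (hρ hz))
  have hg0 : g 0 = p :=
    tendsto_nhds_unique (hfg.tendsto_at (mem_ball_self hρ0)) (hf0.comp hφ.tendsto_atTop)
  exact ⟨φ, hφ, hfg.congr_right (hDp.eqOn_ball hρ0 hg hgD hg0)⟩

end

theorem boundary_jets_stmt5_general (n : ℕ)
    (D : Set (EuclideanSpace ℂ (Fin n)))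
    (hDbd : Bornology.IsBounded D)
    (p : EuclideanSpace ℂ (Fin n))
    (hdisc : ∀ f : ℂ → EuclideanSpace ℂ (Fin n),
      DifferentiableOn ℂ f (ball 0 1) → f '' ball 0 1 ⊆ closure D → p ∈ f '' ball 0 1 →
      ∀ x ∈ ball (0 : ℂ) 1, ∀ y ∈ ball (0 : ℂ) 1, f x = f y)
    (η : ℝ) (hη1 : η < 1)
    (U : Set (EuclideanSpace ℂ (Fin n))) (hUopen : IsOpen U) (hpU : p ∈ U) :
    ∃ V : Set (EuclideanSpace ℂ (Fin n)), IsOpen V ∧ p ∈ V ∧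
      ∀ f : ℂ → EuclideanSpace ℂ (Fin n),
        DifferentiableOn ℂ f (ball 0 1) → f '' ball 0 1 ⊆ D → f 0 ∈ V →
        f '' ball 0 η ⊆ U := by
  by_contra! hcon
  choose f hf hfD hf0 hfU using fun k : ℕ =>
    hcon (ball p (1 / (k + 1))) isOpen_ball (mem_ball_self (by positivity))
  have hf0p : Tendsto (fun k => f k 0) atTop (𝓝 p) := tendsto_iff_dist_tendsto_zero.2 <|
    squeeze_zero (fun _ => dist_nonneg) (fun k => (hf0 k).le)
      tendsto_one_div_add_atTop_nhds_zero_nat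
  obtain ⟨φ, -, hφ⟩ := exists_subseq_tendstoUniformlyOn_const hDbd hdisc
    (lt_max_of_lt_right one_half_pos) (max_lt hη1 one_half_lt_one)
    hf (fun k => mapsTo_iff_image_subset.2 (hfD k)) hf0p
  obtain ⟨ε, hε, hεU⟩ := Metric.isOpen_iff.1 hUopen p hpU
  obtain ⟨k, hk⟩ := (Metric.tendstoUniformlyOn_iff.1 hφ ε hε).exists
  exact hfU (φ k) (image_subset_iff.2 fun z hz =>
    hεU (mem_ball_comm.1 (hk z (ball_subset_ball (le_max_left _ _) hz))))

/-- attraction property of analytic discs: if the closure of a bounded domain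
`D` contains no nontrivial analytic disc through the boundary point `p`, then for every
`0 < η < 1` and every neighborhood `U` of `p` there is a neighborhood `V` of `p` such that
every analytic disc `f : Δ → D` with `f(0) ∈ V` satisfies `f(ηΔ) ⊆ U`. -/
theorem boundary_jets_stmt5 (n : ℕ)
    (D : Set (EuclideanSpace ℂ (Fin n)))
    (hDopen : IsOpen D) (hDconn : IsConnected D) (hDbd : Bornology.IsBounded D)
    (p : EuclideanSpace ℂ (Fin n)) (hp : p ∈ frontier D)
    (hdisc : ∀ f : ℂ → EuclideanSpace ℂ (Fin n),
      DifferentiableOn ℂ f (ball 0 1) → f '' ball 0 1 ⊆ closure D → p ∈ f '' ball 0 1 →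
      ∀ x ∈ ball (0 : ℂ) 1, ∀ y ∈ ball (0 : ℂ) 1, f x = f y)
    (η : ℝ) (hη0 : 0 < η) (hη1 : η < 1)
    (U : Set (EuclideanSpace ℂ (Fin n))) (hUopen : IsOpen U) (hpU : p ∈ U) :
    ∃ V : Set (EuclideanSpace ℂ (Fin n)), IsOpen V ∧ p ∈ V ∧
      ∀ f : ℂ → EuclideanSpace ℂ (Fin n),
        DifferentiableOn ℂ f (ball 0 1) → f '' ball 0 1 ⊆ D → f 0 ∈ V →
        f '' ball 0 η ⊆ U :=
  boundary_jets_stmt5_general n D hDbd p hdisc η hη1 U hUopen hpU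
end

section
/- Let d ∈ ℕ, let p be a real polynomial in one variable of degree at most d, and let r : ℝ → ℝ satisfy r(x) = o(|x|^d) as x → 0 (i.e. for every ε > 0 there is δ > 0 with |r(x)| ≤ ε|x|^d whenever |x| < δ). If there exists δ₀ > 0 such that p(x) + r(x) ≥ 0 for all x ∈ [0, δ₀), then there exists δ₁ > 0 such that p(x) ≥ 0 for all x ∈ (0, δ₁). -/
/-- if `p` is a real polynomial of degree at most `d`, `r(x) = o(|x|^d)` as
`x → 0`, and `p + r ≥ 0` on `[0, δ₀)`, then `p ≥ 0` on `(0, δ₁)` for some `δ₁ > 0`. -/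
theorem boundary_jets_stmt9 (d : ℕ) (p : Polynomial ℝ) (hdeg : p.natDegree ≤ d)
    (r : ℝ → ℝ)
    (hr : ∀ ε > 0, ∃ δ > 0, ∀ x : ℝ, |x| < δ → |r x| ≤ ε * |x| ^ d)
    (δ₀ : ℝ) (hδ₀ : 0 < δ₀)
    (hpos : ∀ x : ℝ, 0 ≤ x → x < δ₀ → 0 ≤ p.eval x + r x) :
    ∃ δ₁ > 0, ∀ x : ℝ, 0 < x → x < δ₁ → 0 ≤ p.eval x := by
  rcases eq_or_ne p 0 with hp | hp
  · exact ⟨1, one_pos, fun x _ _ => by simp [hp]⟩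
  set k := p.rootMultiplicity 0 with hk
  set q := p /ₘ (Polynomial.X - Polynomial.C (0:ℝ)) ^ k with hq
  have hfact : ∀ x : ℝ, p.eval x = x ^ k * q.eval x := by
    intro x
    conv_lhs => rw [← Polynomial.pow_mul_divByMonic_rootMultiplicity_eq p 0]
    simp [hq, hk]
  have hq0 : q.eval 0 ≠ 0 := Polynomial.eval_divByMonic_pow_rootMultiplicity_ne_zero 0 hp
  have hcont : Filter.Tendsto q.eval (nhds 0) (nhds (q.eval 0)) :=
    (Polynomial.continuous q).continuousAt
  rcases hq0.lt_or_gt with hneg | hposq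
  · exfalso
    have hkd : k ≤ d := by
      refine le_trans (le_trans ?_ hdeg) le_rfl
      have hdvd : (Polynomial.X - Polynomial.C (0:ℝ)) ^ k ∣ p :=
        Polynomial.pow_rootMultiplicity_dvd p 0
      have := Polynomial.natDegree_le_of_dvd hdvd hp
      simpa using this
    set c := -q.eval 0 with hc
    have hcpos : 0 < c := by simp [hc]; linarith
    have hev : ∀ᶠ x in nhds (0:ℝ), q.eval x < -(c/2) := by
      apply hcont.eventually_lt_const
      simp [hc]; linarith
    rcases Metric.eventually_nhds_iff.1 hev with ⟨δ₂, hδ₂, hq2⟩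
    rcases hr (c/4) (by linarith) with ⟨δ₃, hδ₃, hr3⟩
    set m := min (min δ₀ δ₂) (min δ₃ 1) with hm
    have hm0 : 0 < m := lt_min (lt_min hδ₀ hδ₂) (lt_min hδ₃ one_pos)
    set x := m / 2 with hx
    have hx0 : 0 < x := by positivity
    have hxm : x < m := by rw [hx]; linarith
    have hxδ0 : x < δ₀ := hxm.trans_le ((min_le_left _ _).trans (min_le_left _ _))
    have hxδ2 : x < δ₂ := hxm.trans_le ((min_le_left _ _).trans (min_le_right _ _))
    have hxδ3 : x < δ₃ := hxm.trans_le ((min_le_right _ _).trans (min_le_left _ _))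
    have hx1 : x < 1 := hxm.trans_le ((min_le_right _ _).trans (min_le_right _ _))
    have h1 := hpos x hx0.le hxδ0
    rw [hfact] at h1
    have h2 : q.eval x < -(c/2) := hq2 (by rw [dist_zero_right, Real.norm_eq_abs, abs_of_pos hx0]; exact hxδ2)
    have h3 : |r x| ≤ c/4 * x ^ d := by
      have := hr3 x (by rw [abs_of_pos hx0]; exact hxδ3)
      rwa [abs_of_pos hx0] at this
    have h4 : x ^ d ≤ x ^ k := pow_le_pow_of_le_one hx0.le hx1.le hkd
    have h5 : 0 < x ^ k := pow_pos hx0 k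
    nlinarith [le_abs_self (r x), neg_abs_le (r x)]
  · rcases Metric.eventually_nhds_iff.1 (hcont.eventually_const_lt hposq) with ⟨δ₂, hδ₂, hq2⟩
    refine ⟨δ₂, hδ₂, fun x hx0 hx2 => ?_⟩
    rw [hfact]
    have : (0:ℝ) < q.eval x := by
      exact hq2 (by rw [dist_zero_right, Real.norm_eq_abs, abs_of_pos hx0]; exact hx2)
    positivity
end

section
/- Let d ∈ ℝ, let l₁, …, l_s ∈ ℝ with l_i ≤ d for all i, let c₁, …, c_s ∈ ℝ, and define p(x) := Σ_{i=1}^s c_i·x^{l_i} for x > 0 (real powers). Let r : ℝ → ℝ satisfy r(x) = o(x^d) as x → 0⁺ (for every ε > 0 there is δ > 0 with |r(x)| ≤ ε·x^d for 0 < x < δ). If p(x) + r(x) ≥ 0 for all sufficiently small x > 0, then p(x) ≥ 0 for all sufficiently small x > 0. -/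
open Filter Set Topology Finset

private lemma rpow_tendsto_zero' {e : ℝ} (he : 0 < e) :
    Tendsto (fun x : ℝ => x ^ e) (𝓝[>] (0:ℝ)) (𝓝 0) := by
  have h := (Real.continuousAt_rpow_const 0 e (Or.inr he.le)).tendsto
  rw [Real.zero_rpow he.ne'] at h
  exact h.mono_left nhdsWithin_le_nhds

private lemma key_lemma (d : ℝ) (s : ℕ) (l : Fin s → ℝ) (hl : ∀ i, l i ≤ d)
    (c : Fin s → ℝ) :
    ∀ n (T : Finset (Fin s)), T.card ≤ n →
    (∀ᶠ x in 𝓝[>] (0:ℝ), 0 ≤ ∑ i ∈ T, c i * x ^ (l i)) ∨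
    (∃ a > (0:ℝ), ∀ᶠ x in 𝓝[>] (0:ℝ), ∑ i ∈ T, c i * x ^ (l i) ≤ -a * x ^ d) := by
  intro n
  induction n with
  | zero =>
    intro T hT
    left
    have : T = ∅ := Finset.card_eq_zero.mp (Nat.le_zero.mp hT)
    simp [this]
  | succ n ih =>
    intro T hT
    rcases T.eq_empty_or_nonempty with rfl | hTne
    · left; simp
    set m := T.inf' hTne l with hm
    have hmem : ∀ i ∈ T, m ≤ l i := fun i hi => Finset.inf'_le _ hi
    obtain ⟨i₀, hi₀T, hi₀⟩ := Finset.exists_mem_eq_inf' hTne l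
    have hmd : m ≤ d := by rw [hm, hi₀]; exact hl i₀
    set C : ℝ := ∑ i ∈ T.filter (fun i => l i = m), c i with hC
    by_cases hC0 : C = 0
    · -- the minimal-exponent terms cancel; drop them and use induction
      have hsplit : ∀ x : ℝ, ∑ i ∈ T, c i * x ^ (l i)
          = ∑ i ∈ T.filter (fun i => ¬ l i = m), c i * x ^ (l i) := by
        intro x
        rw [← Finset.sum_filter_add_sum_filter_not T (fun i => l i = m)]
        have : ∑ i ∈ T.filter (fun i => l i = m), c i * x ^ (l i)
            = (∑ i ∈ T.filter (fun i => l i = m), c i) * x ^ m := by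
          rw [Finset.sum_mul]
          apply Finset.sum_congr rfl
          intro i hi
          rw [(Finset.mem_filter.mp hi).2]
        rw [this, ← hC, hC0, zero_mul, zero_add]
      have hcard : (T.filter (fun i => ¬ l i = m)).card ≤ n := by
        have h1 : (T.filter (fun i => ¬ l i = m)).card < T.card := by
          apply Finset.card_lt_card
          refine ⟨Finset.filter_subset _ _, ?_⟩
          intro hsub
          have := hsub hi₀T
          exact (Finset.mem_filter.mp this).2 hi₀.symm
        omega
      rcases ih _ hcard with h | ⟨a, ha, h⟩
      · left; exact h.mono fun x hx => by rw [hsplit]; exact hx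
      · right; exact ⟨a, ha, h.mono fun x hx => by rw [hsplit]; exact hx⟩
    · -- the minimal-exponent coefficient C is nonzero; p(x)/x^m → C
      have htend : Tendsto (fun x : ℝ => ∑ i ∈ T, c i * x ^ (l i - m))
          (𝓝[>] (0:ℝ)) (𝓝 C) := by
        have : C = ∑ i ∈ T, (if l i = m then c i else 0) := by
          rw [hC, Finset.sum_filter]
        rw [this]
        apply tendsto_finset_sum
        intro i hi
        by_cases hlm : l i = m
        · simp only [hlm, sub_self, if_pos]
          have : (fun x : ℝ => c i * x ^ (0:ℝ)) = fun _ => c i := by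
            funext x; rw [Real.rpow_zero, mul_one]
          rw [this]
          exact tendsto_const_nhds
        · simp only [if_neg hlm]
          have he : 0 < l i - m := by
            have := hmem i hi
            cases lt_or_eq_of_le this with
            | inl h => linarith
            | inr h => exact absurd h.symm hlm
          have := (rpow_tendsto_zero' he).const_mul (c i)
          simpa using this
      have hfactor : ∀ x : ℝ, 0 < x →
          (∑ i ∈ T, c i * x ^ (l i - m)) * x ^ m = ∑ i ∈ T, c i * x ^ (l i) := by
        intro x hx
        rw [Finset.sum_mul]
        apply Finset.sum_congr rfl
        intro i hi
        rw [mul_assoc, ← Real.rpow_add hx, sub_add_cancel]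
      rcases lt_or_gt_of_ne hC0 with hneg | hpos
      · -- C < 0 : p(x) ≤ (C/2) x^m ≤ (C/2) x^d
        right
        refine ⟨-C/2, by linarith, ?_⟩
        have h1 : ∀ᶠ x in 𝓝[>] (0:ℝ), ∑ i ∈ T, c i * x ^ (l i - m) ≤ C/2 :=
          htend.eventually (eventually_le_nhds (by linarith))
        have h2 : ∀ᶠ x in 𝓝[>] (0:ℝ), 0 < x ∧ x < 1 := by
          filter_upwards [Ioo_mem_nhdsGT_of_mem (by norm_num : (0:ℝ) ∈ Set.Ico (0:ℝ) 1)]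
            with x hx
          exact ⟨hx.1, hx.2⟩
        filter_upwards [h1, h2] with x hx1 ⟨hx0, hx1'⟩
        have hxd : x ^ d ≤ x ^ m :=
          Real.rpow_le_rpow_of_exponent_ge hx0 hx1'.le hmd
        have hxm : 0 < x ^ m := Real.rpow_pos_of_pos hx0 m
        have := hfactor x hx0
        rw [← this]
        have : (∑ i ∈ T, c i * x ^ (l i - m)) * x ^ m ≤ (C/2) * x ^ m :=
          mul_le_mul_of_nonneg_right hx1 hxm.le
        calc (∑ i ∈ T, c i * x ^ (l i - m)) * x ^ m ≤ (C/2) * x ^ m := this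
          _ ≤ (C/2) * x ^ d := by nlinarith [Real.rpow_pos_of_pos hx0 d]
          _ = -(-C/2) * x ^ d := by ring
      · -- C > 0 : p(x) ≥ (C/2) x^m > 0
        left
        have h1 : ∀ᶠ x in 𝓝[>] (0:ℝ), C/2 ≤ ∑ i ∈ T, c i * x ^ (l i - m) :=
          htend.eventually (eventually_ge_nhds (by linarith))
        filter_upwards [h1, self_mem_nhdsWithin] with x hx1 hx0
        have hx0 : (0:ℝ) < x := hx0
        have hxm : 0 < x ^ m := Real.rpow_pos_of_pos hx0 m
        rw [← hfactor x hx0]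
        have : 0 ≤ ∑ i ∈ T, c i * x ^ (l i - m) := by linarith
        exact mul_nonneg this hxm.le

/-- the extension of Statement 9 to finite linear combinations of real powers
`x^{l_i}` with `l_i ≤ d`: if `p(x) = Σ cᵢ x^{lᵢ}`, `r(x) = o(x^d)` as `x → 0⁺`, and
`p + r ≥ 0` for all small `x > 0`, then `p ≥ 0` for all small `x > 0`. -/
theorem boundary_jets_stmt10 (d : ℝ) (s : ℕ)
    (l : Fin s → ℝ) (hl : ∀ i, l i ≤ d) (c : Fin s → ℝ)
    (r : ℝ → ℝ)
    (hr : ∀ ε > 0, ∃ δ > 0, ∀ x : ℝ, 0 < x → x < δ → |r x| ≤ ε * x ^ d)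
    (hpos : ∃ δ₀ > 0, ∀ x : ℝ, 0 < x → x < δ₀ → 0 ≤ (∑ i, c i * x ^ (l i)) + r x) :
    ∃ δ₁ > 0, ∀ x : ℝ, 0 < x → x < δ₁ → 0 ≤ ∑ i, c i * x ^ (l i) := by
  rcases key_lemma d s l hl c s Finset.univ (by simp) with h | ⟨a, ha, h⟩
  · rw [eventually_nhdsWithin_iff] at h
    rcases Metric.eventually_nhds_iff.mp h with ⟨δ, hδ, hh⟩
    refine ⟨δ, hδ, fun x hx0 hxδ => ?_⟩
    have : dist x 0 < δ := by
      rw [Real.dist_eq, sub_zero, abs_of_pos hx0]; exact hxδ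
    exact hh this hx0
  · exfalso
    obtain ⟨δ, hδ, hrδ⟩ := hr (a/2) (by linarith)
    obtain ⟨δ₀, hδ₀, hp⟩ := hpos
    have hev : ∀ᶠ x in 𝓝[>] (0:ℝ), x < min δ δ₀ := by
      have : Set.Ioo (0:ℝ) (min δ δ₀) ∈ 𝓝[>] (0:ℝ) :=
        Ioo_mem_nhdsGT_of_mem (by constructor <;> simp [hδ, hδ₀])
      filter_upwards [this] with x hx using hx.2
    have : ∀ᶠ x in 𝓝[>] (0:ℝ), False := by
      filter_upwards [h, hev, self_mem_nhdsWithin] with x hx1 hx2 hx0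
      have hx0 : (0:ℝ) < x := hx0
      have hxδ : x < δ := lt_of_lt_of_le hx2 (min_le_left _ _)
      have hxδ₀ : x < δ₀ := lt_of_lt_of_le hx2 (min_le_right _ _)
      have h1 := hp x hx0 hxδ₀
      have h2 := hrδ x hx0 hxδ
      have hxd : 0 < x ^ d := Real.rpow_pos_of_pos hx0 d
      have h3 : r x ≤ a/2 * x ^ d := (abs_le.mp h2).2
      nlinarith
    exact this.exists.elim (fun _ hf => hf)
end

section
/- Let n₁, n₂ ≥ 1, let ν₁, ν₂ > 0 be real weights, let d ≥ 0, and let P be a real polynomial on ℝ^{n₁}×ℝ^{n₂} that is weighted homogeneous of degree d, i.e. P(t^{ν₁}·X₁, t^{ν₂}·X₂) = t^d·P(X₁,X₂) for all t > 0 and all (X₁,X₂). Let r : ℝ^{n₁}×ℝ^{n₂} → ℝ satisfy: for every ε > 0 there is δ > 0 with |r(X₁,X₂)| ≤ ε·(‖X₁‖^{1/ν₁} + ‖X₂‖^{1/ν₂})^d whenever ‖(X₁,X₂)‖ < δ. If P(X) + r(X) ≥ 0 for all X in a neighborhood of 0, then P(X) ≥ 0 for all X ∈ ℝ^{n₁}×ℝ^{n₂}.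 -/
/-- cancellation rule for weighted homogeneous polynomials: if `P` is a real
polynomial on `ℝ^{n₁} × ℝ^{n₂}`, weighted homogeneous of degree `d` for weights `ν₁, ν₂ > 0`,
`r = o((‖X₁‖^{1/ν₁} + ‖X₂‖^{1/ν₂})^d)` at `0`, and `P + r ≥ 0` near `0`, then `P ≥ 0`
everywhere. -/
theorem boundary_jets_stmt13 (n₁ n₂ : ℕ) (h₁ : 1 ≤ n₁) (h₂ : 1 ≤ n₂)
    (ν₁ ν₂ : ℝ) (hν₁ : 0 < ν₁) (hν₂ : 0 < ν₂) (d : ℝ) (hd : 0 ≤ d)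
    (P : MvPolynomial (Fin n₁ ⊕ Fin n₂) ℝ)
    (hhom : ∀ t : ℝ, 0 < t → ∀ X : EuclideanSpace ℝ (Fin n₁) × EuclideanSpace ℝ (Fin n₂),
      MvPolynomial.eval (Sum.elim (fun i => t ^ ν₁ * X.1 i) fun i => t ^ ν₂ * X.2 i) P =
        t ^ d * MvPolynomial.eval (Sum.elim (fun i => X.1 i) fun i => X.2 i) P)
    (r : EuclideanSpace ℝ (Fin n₁) × EuclideanSpace ℝ (Fin n₂) → ℝ)
    (hr : ∀ ε > 0, ∃ δ > 0,
      ∀ X : EuclideanSpace ℝ (Fin n₁) × EuclideanSpace ℝ (Fin n₂), ‖X‖ < δ →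
        |r X| ≤ ε * (‖X.1‖ ^ (1 / ν₁) + ‖X.2‖ ^ (1 / ν₂)) ^ d)
    (δ₀ : ℝ) (hδ₀ : 0 < δ₀)
    (hpos : ∀ X : EuclideanSpace ℝ (Fin n₁) × EuclideanSpace ℝ (Fin n₂), ‖X‖ < δ₀ →
      0 ≤ MvPolynomial.eval (Sum.elim (fun i => X.1 i) fun i => X.2 i) P + r X) :
    ∀ X : EuclideanSpace ℝ (Fin n₁) × EuclideanSpace ℝ (Fin n₂),
      0 ≤ MvPolynomial.eval (Sum.elim (fun i => X.1 i) fun i => X.2 i) P := by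
  intro X
  set px := MvPolynomial.eval (Sum.elim (fun i => X.1 i) fun i => X.2 i) P with hpx
  set C : ℝ := ‖X.1‖ ^ (1 / ν₁) + ‖X.2‖ ^ (1 / ν₂) with hC
  have hC0 : 0 ≤ C := by positivity
  set Cd : ℝ := C ^ d with hCd
  have hCd0 : 0 ≤ Cd := Real.rpow_nonneg hC0 d
  have key : ∀ ε > 0, -(ε * Cd) ≤ px := by
    intro ε hε
    obtain ⟨δ, hδ, hrδ⟩ := hr ε hε
    -- find small t > 0
    have htend : Filter.Tendsto
        (fun t : ℝ => max (t ^ ν₁ * ‖X.1‖) (t ^ ν₂ * ‖X.2‖)) (nhdsWithin 0 (Set.Ioi 0))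
        (nhds 0) := by
      have h1 : Filter.Tendsto (fun t : ℝ => t ^ ν₁ * ‖X.1‖) (nhdsWithin 0 (Set.Ioi 0))
          (nhds 0) := by
        have := (Real.continuousAt_rpow_const 0 ν₁ (Or.inr hν₁.le)).tendsto
        rw [Real.zero_rpow hν₁.ne'] at this
        simpa using (this.mono_left nhdsWithin_le_nhds).mul_const ‖X.1‖
      have h2 : Filter.Tendsto (fun t : ℝ => t ^ ν₂ * ‖X.2‖) (nhdsWithin 0 (Set.Ioi 0))
          (nhds 0) := by
        have := (Real.continuousAt_rpow_const 0 ν₂ (Or.inr hν₂.le)).tendsto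
        rw [Real.zero_rpow hν₂.ne'] at this
        simpa using (this.mono_left nhdsWithin_le_nhds).mul_const ‖X.2‖
      simpa using h1.max h2
    have hev : ∀ᶠ t in nhdsWithin (0 : ℝ) (Set.Ioi 0),
        max (t ^ ν₁ * ‖X.1‖) (t ^ ν₂ * ‖X.2‖) < min δ δ₀ :=
      htend.eventually (Filter.Tendsto.eventually_lt_const (by positivity) Filter.tendsto_id)
    have hself : ∀ᶠ t in nhdsWithin (0 : ℝ) (Set.Ioi 0), (0 : ℝ) < t :=
      eventually_mem_nhdsWithin
    obtain ⟨t, hmax, ht⟩ := (hev.and hself).exists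
    -- the scaled point
    set Y : EuclideanSpace ℝ (Fin n₁) × EuclideanSpace ℝ (Fin n₂) :=
      ((t ^ ν₁ : ℝ) • X.1, (t ^ ν₂ : ℝ) • X.2) with hY
    have hY1 : ‖Y.1‖ = t ^ ν₁ * ‖X.1‖ := by
      rw [hY, norm_smul, Real.norm_eq_abs, abs_of_pos (Real.rpow_pos_of_pos ht ν₁)]
    have hY2 : ‖Y.2‖ = t ^ ν₂ * ‖X.2‖ := by
      rw [hY, norm_smul, Real.norm_eq_abs, abs_of_pos (Real.rpow_pos_of_pos ht ν₂)]
    have hYnorm : ‖Y‖ = max (t ^ ν₁ * ‖X.1‖) (t ^ ν₂ * ‖X.2‖) := by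
      rw [Prod.norm_def, hY1, hY2]
    have hYδ : ‖Y‖ < δ := by rw [hYnorm]; exact hmax.trans_le (min_le_left _ _)
    have hYδ₀ : ‖Y‖ < δ₀ := by rw [hYnorm]; exact hmax.trans_le (min_le_right _ _)
    have hevalY : MvPolynomial.eval (Sum.elim (fun i => Y.1 i) fun i => Y.2 i) P
        = t ^ d * px := by
      have := hhom t ht X
      simpa [hY, hpx] using this
    have hbound : |r Y| ≤ ε * (t ^ d * Cd) := by
      have h := hrδ Y hYδ
      have h1 : ‖Y.1‖ ^ (1 / ν₁) = t * ‖X.1‖ ^ (1 / ν₁) := by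
        rw [hY1, Real.mul_rpow (Real.rpow_nonneg ht.le ν₁) (norm_nonneg _),
          ← Real.rpow_mul ht.le, mul_one_div_cancel hν₁.ne', Real.rpow_one]
      have h2 : ‖Y.2‖ ^ (1 / ν₂) = t * ‖X.2‖ ^ (1 / ν₂) := by
        rw [hY2, Real.mul_rpow (Real.rpow_nonneg ht.le ν₂) (norm_nonneg _),
          ← Real.rpow_mul ht.le, mul_one_div_cancel hν₂.ne', Real.rpow_one]
      calc |r Y| ≤ ε * (‖Y.1‖ ^ (1 / ν₁) + ‖Y.2‖ ^ (1 / ν₂)) ^ d := h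
        _ = ε * (t ^ d * Cd) := by
            rw [h1, h2, ← mul_add, Real.mul_rpow ht.le hC0, hC, hCd]
    have hp := hpos Y hYδ₀
    rw [hevalY] at hp
    have htd : (0 : ℝ) < t ^ d := Real.rpow_pos_of_pos ht d
    have hrY : r Y ≤ ε * (t ^ d * Cd) := le_of_abs_le hbound
    have hring : t ^ d * (-(ε * Cd)) = -(ε * (t ^ d * Cd)) := by ring
    have : t ^ d * (-(ε * Cd)) ≤ t ^ d * px := by
      rw [hring]; linarith
    exact le_of_mul_le_mul_left this htd
  by_contra hneg
  push_neg at hneg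
  have hnp : 0 < -px := by linarith
  have hεpos : 0 < -px / (2 * (Cd + 1)) := by positivity
  have h := key _ hεpos
  have h2 : -px / (2 * (Cd + 1)) * Cd ≤ -px / 2 := by
    rw [div_mul_eq_mul_div, div_le_div_iff₀ (by positivity) (by norm_num)]
    nlinarith [neg_pos.mpr hneg]
  linarith
end

section
/- Let n₁, n₂ ≥ 1, let ν₁, ν₂ > 0 be real weights, let d ≥ 0, and let P be a nonzero real polynomial on ℝ^{n₁}×ℝ^{n₂} that is weighted homogeneous of degree d, i.e. P(t^{ν₁}·X₁, t^{ν₂}·X₂) = t^d·P(X₁,X₂) for all t > 0 and all (X₁,X₂). Let r : ℝ^{n₁}×ℝ^{n₂} → ℝ satisfy: for every ε > 0 there is δ > 0 with |r(X₁,X₂)| ≤ ε·(‖X₁‖^{1/ν₁} + ‖X₂‖^{1/ν₂})^d whenever ‖(X₁,X₂)‖ < δ, and assume P(X) + r(X) ≥ 0 for all X in a neighborhood of 0. Let P₀ be the nonzero bihomogeneous component of P of minimal degree in X₁ (for a weighted homogeneous P this is a single bihomogeneous component). Then P₀(X) ≥ 0 for all X ∈ ℝ^{n₁}×ℝ^{n₂}.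 -/
/-!
Testing the inequality `P + r ≥ 0` along the weighted dilation `t ↦ (t^ν₁ X₁, t^ν₂ X₂)` and
letting `t → 0⁺` shows that the homogeneous part dominates the remainder, so `P ≥ 0` everywhere.
Then `P(s X₁, X₂) = s^{l₀} (P₀(X) + O(s))` as `s → 0⁺`, where `l₀` is the minimal degree in `X₁`,
so `P₀(X) ≥ 0` as well.
-/

/-- The degree in the first group of variables of a monomial exponent on `Fin n₁ ⊕ Fin n₂`. -/
def firstDegree {n₁ n₂ : ℕ} (m : Fin n₁ ⊕ Fin n₂ →₀ ℕ) : ℕ :=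
  ∑ i : Fin n₁, m (Sum.inl i)

/-- The minimal degree in the first group of variables among monomials of `P`. -/
noncomputable def minFirstDegree {n₁ n₂ : ℕ} (P : MvPolynomial (Fin n₁ ⊕ Fin n₂) ℝ) : ℕ :=
  sInf {l : ℕ | ∃ m ∈ P.support, firstDegree m = l}

/-- The bihomogeneous component of `P` of minimal degree in the first group of variables:
the sum of the monomials of `P` whose first-group degree is minimal. -/
noncomputable def minComponent {n₁ n₂ : ℕ} (P : MvPolynomial (Fin n₁ ⊕ Fin n₂) ℝ) :
    MvPolynomial (Fin n₁ ⊕ Fin n₂) ℝ :=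
  ∑ m ∈ P.support.filter (fun m => firstDegree m = minFirstDegree P),
    MvPolynomial.monomial m (MvPolynomial.coeff m P)

open MvPolynomial Filter Topology Asymptotics

noncomputable section WeightedDilation

variable {E₁ E₂ : Type*} [NormedAddCommGroup E₁] [NormedSpace ℝ E₁]
  [NormedAddCommGroup E₂] [NormedSpace ℝ E₂]

def weightedDilation (ν₁ ν₂ t : ℝ) (X : E₁ × E₂) : E₁ × E₂ :=
  (t ^ ν₁ • X.1, t ^ ν₂ • X.2)

def weightedNorm (ν₁ ν₂ : ℝ) (X : E₁ × E₂) : ℝ :=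
  ‖X.1‖ ^ (1 / ν₁) + ‖X.2‖ ^ (1 / ν₂)

omit [NormedSpace ℝ E₁] [NormedSpace ℝ E₂] in
lemma weightedNorm_nonneg (ν₁ ν₂ : ℝ) (X : E₁ × E₂) : 0 ≤ weightedNorm ν₁ ν₂ X := by
  unfold weightedNorm; positivity

lemma norm_rpow_smul_rpow_one_div {E : Type*} [NormedAddCommGroup E] [NormedSpace ℝ E]
    {t ν : ℝ} (ht : 0 ≤ t) (hν : ν ≠ 0) (v : E) :
    ‖t ^ ν • v‖ ^ (1 / ν) = t * ‖v‖ ^ (1 / ν) := by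
  rw [norm_smul, Real.norm_of_nonneg (Real.rpow_nonneg ht ν),
    Real.mul_rpow (Real.rpow_nonneg ht ν) (norm_nonneg v), ← Real.rpow_mul ht,
    mul_one_div_cancel hν, Real.rpow_one]

lemma weightedNorm_weightedDilation {ν₁ ν₂ t : ℝ} (hν₁ : ν₁ ≠ 0) (hν₂ : ν₂ ≠ 0) (ht : 0 ≤ t)
    (X : E₁ × E₂) :
    weightedNorm ν₁ ν₂ (weightedDilation ν₁ ν₂ t X) = t * weightedNorm ν₁ ν₂ X := by
  simp only [weightedNorm, weightedDilation, norm_rpow_smul_rpow_one_div ht hν₁,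
    norm_rpow_smul_rpow_one_div ht hν₂, mul_add]

lemma tendsto_weightedDilation_nhdsGT_zero {ν₁ ν₂ : ℝ} (hν₁ : 0 < ν₁) (hν₂ : 0 < ν₂)
    (X : E₁ × E₂) :
    Tendsto (fun t => weightedDilation ν₁ ν₂ t X) (𝓝[>] 0) (𝓝 0) := by
  have hpow : ∀ {ν : ℝ}, 0 < ν → Tendsto (fun t : ℝ => t ^ ν) (𝓝[>] 0) (𝓝 0) := fun hν => by
    simpa [Real.zero_rpow hν.ne'] using
      ((Real.continuousAt_rpow_const 0 _ (Or.inr hν.le)).tendsto).mono_left nhdsWithin_le_nhds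
  simpa [weightedDilation, Prod.zero_eq_mk] using
    ((hpow hν₁).smul_const X.1).prodMk_nhds ((hpow hν₂).smul_const X.2)

theorem nonneg_of_weightedHomogeneous_of_eventually_nonneg_add {f r : E₁ × E₂ → ℝ}
    {ν₁ ν₂ d : ℝ} (hν₁ : 0 < ν₁) (hν₂ : 0 < ν₂)
    (hf : ∀ t > 0, ∀ X, f (weightedDilation ν₁ ν₂ t X) = t ^ d * f X)
    (hr : r =o[𝓝 0] fun X => weightedNorm ν₁ ν₂ X ^ d)
    (hpos : ∀ᶠ X in 𝓝 0, 0 ≤ f X + r X) (X : E₁ × E₂) :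
    0 ≤ f X := by
  set K := weightedNorm ν₁ ν₂ X ^ d
  have hlower : ∀ c > 0, -(c * K) ≤ f X := by
    intro c hc
    obtain ⟨t, ⟨hrt, hpost⟩, ht : 0 < t⟩ :=
      (((tendsto_weightedDilation_nhdsGT_zero hν₁ hν₂ X).eventually
        ((hr.bound hc).and hpos)).and self_mem_nhdsWithin).exists
    have hnorm : ‖weightedNorm ν₁ ν₂ (weightedDilation ν₁ ν₂ t X) ^ d‖ = t ^ d * K := by
      rw [weightedNorm_weightedDilation hν₁.ne' hν₂.ne' ht.le,
        Real.mul_rpow ht.le (weightedNorm_nonneg ν₁ ν₂ X),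
        Real.norm_of_nonneg (mul_nonneg (Real.rpow_nonneg ht.le d)
          (Real.rpow_nonneg (weightedNorm_nonneg ν₁ ν₂ X) d))]
    rw [hnorm, Real.norm_eq_abs] at hrt
    rw [hf t ht] at hpost
    have htd : 0 < t ^ d := Real.rpow_pos_of_pos ht d
    have : t ^ d * -(c * K) ≤ t ^ d * f X := by
      rw [mul_neg, mul_left_comm]
      linarith [le_abs_self (r (weightedDilation ν₁ ν₂ t X))]
    exact le_of_mul_le_mul_left this htd
  have hlim : Tendsto (fun c : ℝ => -(c * K)) (𝓝[>] 0) (𝓝 0) := by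
    simpa using ((tendsto_id.mul_const K).neg).mono_left (nhdsWithin_le_nhds (a := (0 : ℝ)))
  exact le_of_tendsto hlim (eventually_mem_nhdsWithin.mono hlower)

end WeightedDilation

section MinComponent

variable {n₁ n₂ : ℕ} {P : MvPolynomial (Fin n₁ ⊕ Fin n₂) ℝ}

lemma minFirstDegree_le_firstDegree {m : Fin n₁ ⊕ Fin n₂ →₀ ℕ} (hm : m ∈ P.support) :
    minFirstDegree P ≤ firstDegree m :=
  Nat.sInf_le ⟨m, hm, rfl⟩

lemma eval_scaleFirst_eq_sum (s : ℝ) (x : Fin n₁ ⊕ Fin n₂ → ℝ) :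
    eval (Sum.elim (fun i => s * x (.inl i)) fun i => x (.inr i)) P =
      ∑ m ∈ P.support, coeff m P * s ^ firstDegree m * eval x (monomial m 1) := by
  rw [eval_eq']
  refine Finset.sum_congr rfl fun m _ => ?_
  rw [eval_monomial, Finsupp.prod_pow, Fintype.prod_sum_type, Fintype.prod_sum_type]
  simp only [Sum.elim_inl, Sum.elim_inr, mul_pow, Finset.prod_mul_distrib,
    Finset.prod_pow_eq_pow_sum, firstDegree]
  ring

lemma eval_minComponent (x : Fin n₁ ⊕ Fin n₂ → ℝ) :
    eval x (minComponent P) =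
      ∑ m ∈ P.support, coeff m P * 0 ^ (firstDegree m - minFirstDegree P) *
        eval x (monomial m 1) := by
  rw [minComponent, map_sum, Finset.sum_filter]
  refine Finset.sum_congr rfl fun m hm => ?_
  have := minFirstDegree_le_firstDegree hm
  split_ifs with h
  · simp [h, eval_monomial]
  · simp [zero_pow (by omega : firstDegree m - minFirstDegree P ≠ 0)]

theorem eval_minComponent_nonneg (hP : ∀ x, 0 ≤ eval x P) (x : Fin n₁ ⊕ Fin n₂ → ℝ) :
    0 ≤ eval x (minComponent P) := by
  set l₀ := minFirstDegree P
  set g : ℝ → ℝ := fun s =>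
    ∑ m ∈ P.support, coeff m P * s ^ (firstDegree m - l₀) * eval x (monomial m 1)
  have hg : ∀ s,
      eval (Sum.elim (fun i => s * x (.inl i)) fun i => x (.inr i)) P = s ^ l₀ * g s := by
    intro s
    rw [eval_scaleFirst_eq_sum, Finset.mul_sum]
    refine Finset.sum_congr rfl fun m hm => ?_
    rw [← Nat.add_sub_cancel' (minFirstDegree_le_firstDegree hm), pow_add]
    simp only [l₀, Nat.add_sub_cancel_left]
    ring
  have hg_nonneg : ∀ᶠ s in 𝓝[>] (0 : ℝ), 0 ≤ g s :=
    eventually_mem_nhdsWithin.mono fun s (hs : 0 < s) =>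
      nonneg_of_mul_nonneg_right (hg s ▸ hP _) (pow_pos hs l₀)
  have hcont : Continuous g := by fun_prop
  rw [eval_minComponent]
  exact ge_of_tendsto (hcont.tendsto 0 |>.mono_left nhdsWithin_le_nhds) hg_nonneg

end MinComponent

theorem boundary_jets_stmt14_general (n₁ n₂ : ℕ)
    (ν₁ ν₂ : ℝ) (hν₁ : 0 < ν₁) (hν₂ : 0 < ν₂) (d : ℝ)
    (P : MvPolynomial (Fin n₁ ⊕ Fin n₂) ℝ)
    (hhom : ∀ t : ℝ, 0 < t → ∀ X : EuclideanSpace ℝ (Fin n₁) × EuclideanSpace ℝ (Fin n₂),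
      MvPolynomial.eval (Sum.elim (fun i => t ^ ν₁ * X.1 i) fun i => t ^ ν₂ * X.2 i) P =
        t ^ d * MvPolynomial.eval (Sum.elim (fun i => X.1 i) fun i => X.2 i) P)
    (r : EuclideanSpace ℝ (Fin n₁) × EuclideanSpace ℝ (Fin n₂) → ℝ)
    (hr : ∀ ε > 0, ∃ δ > 0,
      ∀ X : EuclideanSpace ℝ (Fin n₁) × EuclideanSpace ℝ (Fin n₂), ‖X‖ < δ →
        |r X| ≤ ε * (‖X.1‖ ^ (1 / ν₁) + ‖X.2‖ ^ (1 / ν₂)) ^ d)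
    (δ₀ : ℝ) (hδ₀ : 0 < δ₀)
    (hpos : ∀ X : EuclideanSpace ℝ (Fin n₁) × EuclideanSpace ℝ (Fin n₂), ‖X‖ < δ₀ →
      0 ≤ MvPolynomial.eval (Sum.elim (fun i => X.1 i) fun i => X.2 i) P + r X) :
    ∀ X : EuclideanSpace ℝ (Fin n₁) × EuclideanSpace ℝ (Fin n₂),
      0 ≤ MvPolynomial.eval (Sum.elim (fun i => X.1 i) fun i => X.2 i) (minComponent P) := by
  have hr' : r =o[𝓝 0] fun X => weightedNorm ν₁ ν₂ X ^ d := .of_bound fun c hc => by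
    obtain ⟨δ, hδ, hbound⟩ := hr c hc
    filter_upwards [Metric.ball_mem_nhds 0 hδ] with X hX
    rw [Real.norm_eq_abs, Real.norm_of_nonneg (Real.rpow_nonneg (weightedNorm_nonneg ..) d)]
    exact hbound X (by simpa using hX)
  have hpos' : ∀ᶠ X in 𝓝 0, 0 ≤ eval (Sum.elim (fun i => X.1 i) fun i => X.2 i) P + r X :=
    Metric.eventually_nhds_iff.2 ⟨δ₀, hδ₀, fun X hX => hpos X (by simpa using hX)⟩
  have hP_nonneg : ∀ x, 0 ≤ eval x P := fun x => by
    simpa [← Function.comp_def, Sum.elim_comp_inl_inr] using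
      nonneg_of_weightedHomogeneous_of_eventually_nonneg_add hν₁ hν₂
        (fun t ht X => by simpa [weightedDilation] using hhom t ht X) hr' hpos'
        (WithLp.toLp 2 (x ∘ .inl), WithLp.toLp 2 (x ∘ .inr))
  exact fun X => eval_minComponent_nonneg hP_nonneg _

/-- under the hypotheses of the cancellation rule (Statement 13), if `P ≠ 0`
and `P₀` is the nonzero bihomogeneous component of `P` of minimal degree in `X₁`, then
`P₀ ≥ 0` everywhere. -/
theorem boundary_jets_stmt14 (n₁ n₂ : ℕ) (h₁ : 1 ≤ n₁) (h₂ : 1 ≤ n₂)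
    (ν₁ ν₂ : ℝ) (hν₁ : 0 < ν₁) (hν₂ : 0 < ν₂) (d : ℝ) (hd : 0 ≤ d)
    (P : MvPolynomial (Fin n₁ ⊕ Fin n₂) ℝ) (hP : P ≠ 0)
    (hhom : ∀ t : ℝ, 0 < t → ∀ X : EuclideanSpace ℝ (Fin n₁) × EuclideanSpace ℝ (Fin n₂),
      MvPolynomial.eval (Sum.elim (fun i => t ^ ν₁ * X.1 i) fun i => t ^ ν₂ * X.2 i) P =
        t ^ d * MvPolynomial.eval (Sum.elim (fun i => X.1 i) fun i => X.2 i) P)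
    (r : EuclideanSpace ℝ (Fin n₁) × EuclideanSpace ℝ (Fin n₂) → ℝ)
    (hr : ∀ ε > 0, ∃ δ > 0,
      ∀ X : EuclideanSpace ℝ (Fin n₁) × EuclideanSpace ℝ (Fin n₂), ‖X‖ < δ →
        |r X| ≤ ε * (‖X.1‖ ^ (1 / ν₁) + ‖X.2‖ ^ (1 / ν₂)) ^ d)
    (δ₀ : ℝ) (hδ₀ : 0 < δ₀)
    (hpos : ∀ X : EuclideanSpace ℝ (Fin n₁) × EuclideanSpace ℝ (Fin n₂), ‖X‖ < δ₀ →
      0 ≤ MvPolynomial.eval (Sum.elim (fun i => X.1 i) fun i => X.2 i) P + r X) :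
    ∀ X : EuclideanSpace ℝ (Fin n₁) × EuclideanSpace ℝ (Fin n₂),
      0 ≤ MvPolynomial.eval (Sum.elim (fun i => X.1 i) fun i => X.2 i) (minComponent P) :=
  boundary_jets_stmt14_general n₁ n₂ ν₁ ν₂ hν₁ hν₂ d P hhom r hr δ₀ hδ₀ hpos
end

section
/- Let s ∈ ℕ, d = 2s, and let p₀, …, p_d ∈ ℂ. Define p : ℂ → ℂ by p(z) = Σ_{k=0}^d p_k·z^k·conj(z)^{d−k}, and assume p is real-valued (Im p(z) = 0 for all z ∈ ℂ). If there is δ > 0 such that p(z) ≥ 0 for all z ∈ ℂ with |z| < δ, then the middle coefficient p_s is real and nonnegative, i.e. Im p_s = 0 and Re p_s ≥ 0. -/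
/-!
Averaging `p` over the `N = 2s + 1` points `r ζ^j`, with `ζ` a primitive `N`-th root of unity,
kills every monomial `z^k conj(z)^(2s-k)` except the middle one: on the circle of radius `r` it
equals `r^(2s) ζ^(j(2k-2s))`, and `N ∤ 2k - 2s` unless `k = s`. The average is therefore
`r^(2s) p_s`, an average of values of `p` that are real and, for `r < δ`, nonnegative.
-/

open Finset ComplexConjugate

theorem IsPrimitiveRoot.sum_range_zpow_pow {K : Type*} [Field K] {ζ : K} {N : ℕ}
    (hζ : IsPrimitiveRoot ζ N) (m : ℤ) :
    ∑ j ∈ range N, (ζ ^ m) ^ j = if (N : ℤ) ∣ m then (N : K) else 0 := by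
  split_ifs with hm
  · simp [(hζ.zpow_eq_one_iff_dvd m).2 hm]
  · have hne : ζ ^ m ≠ 1 := fun h => hm ((hζ.zpow_eq_one_iff_dvd m).1 h)
    rw [geom_sum_eq hne, ← zpow_natCast, ← zpow_mul, mul_comm, zpow_mul, hζ.zpow_eq_one,
      one_zpow, sub_self, zero_div]

theorem Complex.pow_mul_conj_pow_of_norm_eq_one {u : ℂ} (hu : ‖u‖ = 1) (r : ℝ) {k n : ℕ}
    (hk : k ≤ n) :
    ((r : ℂ) * u) ^ k * conj ((r : ℂ) * u) ^ (n - k) = (r : ℂ) ^ n * u ^ (2 * (k : ℤ) - n) := by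
  have hu0 : u ≠ 0 := norm_ne_zero_iff.1 (by rw [hu]; exact one_ne_zero)
  rw [map_mul, Complex.conj_ofReal, ← Complex.inv_eq_conj hu, mul_pow, mul_pow, mul_mul_mul_comm,
    ← pow_add, Nat.add_sub_cancel' hk, ← zpow_natCast u, ← zpow_natCast u⁻¹, inv_zpow',
    ← zpow_add₀ hu0]
  congr 2
  push_cast [Nat.cast_sub hk]
  ring

theorem eq_of_dvd_two_mul_sub_of_lt {N k s : ℕ} (hN : 2 * s < N) (hk : k ≤ 2 * s)
    (hdvd : (N : ℤ) ∣ 2 * (k : ℤ) - (2 * s : ℕ)) : k = s := by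
  have := Int.eq_zero_of_abs_lt_dvd hdvd (by rw [abs_lt]; push_cast; omega)
  omega

theorem IsPrimitiveRoot.sum_sum_mul_pow_mul_conj_pow {s N : ℕ} {ζ : ℂ}
    (hζ : IsPrimitiveRoot ζ N) (hN : 2 * s < N) (c : ℕ → ℂ) (r : ℝ) :
    ∑ j ∈ range N, ∑ k ∈ range (2 * s + 1),
        c k * ((r : ℂ) * ζ ^ j) ^ k * conj ((r : ℂ) * ζ ^ j) ^ (2 * s - k)
      = N * (r : ℂ) ^ (2 * s) * c s := by
  have hnorm : ∀ j : ℕ, ‖ζ ^ j‖ = 1 := fun j => by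
    rw [norm_pow, hζ.norm'_eq_one (by omega), one_pow]
  calc ∑ j ∈ range N, ∑ k ∈ range (2 * s + 1),
        c k * ((r : ℂ) * ζ ^ j) ^ k * conj ((r : ℂ) * ζ ^ j) ^ (2 * s - k)
      = ∑ k ∈ range (2 * s + 1), c k * (r : ℂ) ^ (2 * s) *
          ∑ j ∈ range N, (ζ ^ (2 * (k : ℤ) - (2 * s : ℕ))) ^ j := by
        rw [sum_comm]
        refine sum_congr rfl fun k hk => ?_
        rw [mul_sum]
        refine sum_congr rfl fun j _ => ?_
        rw [mul_assoc, Complex.pow_mul_conj_pow_of_norm_eq_one (hnorm j) r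
          (Nat.lt_succ_iff.1 (mem_range.1 hk)), ← zpow_natCast ζ j, ← zpow_mul, mul_comm (j : ℤ),
          zpow_mul, zpow_natCast, mul_assoc]
    _ = ∑ k ∈ range (2 * s + 1), if k = s then c s * (r : ℂ) ^ (2 * s) * N else 0 := by
        refine sum_congr rfl fun k hk => ?_
        rw [hζ.sum_range_zpow_pow]
        by_cases hks : k = s
        · simp [hks]
        · have hndvd : ¬ (N : ℤ) ∣ 2 * (k : ℤ) - (2 * s : ℕ) := fun h =>
            hks (eq_of_dvd_two_mul_sub_of_lt hN (Nat.lt_succ_iff.1 (mem_range.1 hk)) h)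
          rw [if_neg hndvd, if_neg hks, mul_zero]
    _ = N * (r : ℂ) ^ (2 * s) * c s := by
        rw [sum_ite_eq', if_pos (mem_range.2 (by omega))]
        ring

/-- for a real-valued homogeneous polynomial `p(z) = Σ_k p_k z^k conj(z)^{2s-k}`
of even degree `d = 2s` that is nonnegative near `0`, the middle coefficient `p_s` is real and
nonnegative. -/
theorem boundary_jets_stmt16 (s : ℕ) (pc : ℕ → ℂ)
    (p : ℂ → ℂ)
    (hp : ∀ z : ℂ, p z = ∑ k ∈ Finset.range (2 * s + 1),
      pc k * z ^ k * (starRingEnd ℂ z) ^ (2 * s - k))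
    (hreal : ∀ z : ℂ, (p z).im = 0)
    (δ : ℝ) (hδ : 0 < δ)
    (hpos : ∀ z : ℂ, ‖z‖ < δ → 0 ≤ (p z).re) :
    (pc s).im = 0 ∧ 0 ≤ (pc s).re := by
  set N := 2 * s + 1
  set r := δ / 2
  have hζ := Complex.isPrimitiveRoot_exp N (by omega)
  set ζ := Complex.exp (2 * Real.pi * Complex.I / N)
  have hsum : ∑ j ∈ range N, p (r * ζ ^ j) = ((N * r ^ (2 * s) : ℝ) : ℂ) * pc s := by
    simp_rw [hp]
    push_cast
    exact hζ.sum_sum_mul_pow_mul_conj_pow (by omega) pc r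
  have hsmall : ∀ j : ℕ, ‖(r : ℂ) * ζ ^ j‖ < δ := fun j => by
    rw [norm_mul, norm_pow, hζ.norm'_eq_one (by omega), one_pow, mul_one, Complex.norm_real,
      Real.norm_of_nonneg (by positivity)]
    exact half_lt_self hδ
  have hscale : (0 : ℝ) < N * r ^ (2 * s) := by positivity
  have him := congrArg Complex.im hsum
  have hre := congrArg Complex.re hsum
  rw [Complex.im_sum, sum_eq_zero fun j _ => hreal _, Complex.im_ofReal_mul] at him
  rw [Complex.re_sum, Complex.re_ofReal_mul] at hre
  exact ⟨(mul_eq_zero.1 him.symm).resolve_left hscale.ne',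
    nonneg_of_mul_nonneg_right (hre ▸ sum_nonneg fun j _ => hpos _ (hsmall j)) hscale⟩
end
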